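/- arXiv:1408.4046 — 8 statements merged into one kernel-verified Lean document; each statement's English description precedes it below -/
import Mathlib

section
/- For every integer g ≥ 1, the unique integer n ≥ 2 satisfying ⌈(n-2)(n-3)/12⌉ ≤ g ≤ ⌈(n-1)(n-2)/12⌉ - 1 is n = ⌊(5 + √(48g+1))/2⌋. -/
private lemma ceil_cond1 (n g : ℤ) :
    ⌈(((n : ℚ) - 2) * ((n : ℚ) - 3)) / 12⌉ ≤ g ↔ (n-2)*(n-3) ≤ 12*g := by
  rw [Int.ceil_le, div_le_iff₀ (by norm_num : (0:ℚ) < 12),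
    show (((n:ℚ)-2)*((n:ℚ)-3)) = (((n-2)*(n-3) : ℤ) : ℚ) by push_cast; ring,
    show ((g:ℚ)*12) = ((12*g : ℤ) : ℚ) by push_cast; ring, Int.cast_le]

private lemma ceil_cond2 (n g : ℤ) :
    g ≤ ⌈(((n : ℚ) - 1) * ((n : ℚ) - 2)) / 12⌉ - 1 ↔ 12*g < (n-1)*(n-2) := by
  rw [Int.le_sub_one_iff, Int.lt_ceil, lt_div_iff₀ (by norm_num : (0:ℚ) < 12),
    show (((n:ℚ)-1)*((n:ℚ)-2)) = (((n-1)*(n-2) : ℤ) : ℚ) by push_cast; ring,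
    show ((g:ℚ)*12) = ((12*g : ℤ) : ℚ) by push_cast; ring, Int.cast_lt]

theorem unique_n_floor (g : ℤ) (hg : 1 ≤ g) :
    (∃! n : ℤ, 2 ≤ n ∧ ⌈(((n : ℚ) - 2) * ((n : ℚ) - 3)) / 12⌉ ≤ g ∧
      g ≤ ⌈(((n : ℚ) - 1) * ((n : ℚ) - 2)) / 12⌉ - 1) ∧
    (2 ≤ ⌊(5 + Real.sqrt (48 * (g : ℝ) + 1)) / 2⌋ ∧
      ⌈(((⌊(5 + Real.sqrt (48 * (g : ℝ) + 1)) / 2⌋ : ℚ) - 2) *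
        ((⌊(5 + Real.sqrt (48 * (g : ℝ) + 1)) / 2⌋ : ℚ) - 3)) / 12⌉ ≤ g ∧
      g ≤ ⌈(((⌊(5 + Real.sqrt (48 * (g : ℝ) + 1)) / 2⌋ : ℚ) - 1) *
        ((⌊(5 + Real.sqrt (48 * (g : ℝ) + 1)) / 2⌋ : ℚ) - 2)) / 12⌉ - 1) := by
  set s : ℝ := Real.sqrt (48 * (g : ℝ) + 1) with hs
  set N : ℤ := ⌊(5 + s) / 2⌋ with hN
  have hg1 : (0:ℝ) ≤ 48 * (g:ℝ) + 1 := by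
    have : (1:ℝ) ≤ (g:ℝ) := by exact_mod_cast hg
    linarith
  have hsq : s ^ 2 = 48 * (g:ℝ) + 1 := Real.sq_sqrt hg1
  have hs7 : (7:ℝ) ≤ s := by
    rw [hs]
    have : (49:ℝ) ≤ 48 * (g:ℝ) + 1 := by
      have : (1:ℝ) ≤ (g:ℝ) := by exact_mod_cast hg
      linarith
    nlinarith [Real.sq_sqrt hg1, Real.sqrt_nonneg (48 * (g:ℝ) + 1)]
  have hN6 : 6 ≤ N := by
    rw [hN, Int.le_floor]
    push_cast
    linarith
  have hfl : (N:ℝ) ≤ (5 + s) / 2 := Int.floor_le _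
  have hfu : (5 + s) / 2 < (N:ℝ) + 1 := Int.lt_floor_add_one _
  -- lower: (2N-5)^2 ≤ 48g+1
  have hlow : (N-2)*(N-3) ≤ 12*g := by
    have h1 : (2*(N:ℝ) - 5) ≤ s := by linarith
    have h2 : (0:ℝ) ≤ 2*(N:ℝ) - 5 := by
      have : (6:ℝ) ≤ (N:ℝ) := by exact_mod_cast hN6
      linarith
    have h3 : (2*(N:ℝ) - 5)^2 ≤ 48 * (g:ℝ) + 1 := by
      nlinarith
    have h4 : (2*N - 5)^2 ≤ 48 * g + 1 := by exact_mod_cast h3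
    nlinarith
  have hupp : 12*g < (N-1)*(N-2) := by
    have h1 : s < 2*(N:ℝ) - 3 := by linarith
    have h3 : 48 * (g:ℝ) + 1 < (2*(N:ℝ) - 3)^2 := by nlinarith
    have h4 : 48 * g + 1 < (2*N - 3)^2 := by exact_mod_cast h3
    nlinarith
  have hPN : 2 ≤ N ∧ ⌈(((N : ℚ) - 2) * ((N : ℚ) - 3)) / 12⌉ ≤ g ∧
      g ≤ ⌈(((N : ℚ) - 1) * ((N : ℚ) - 2)) / 12⌉ - 1 :=
    ⟨by linarith, (ceil_cond1 N g).mpr hlow, (ceil_cond2 N g).mpr hupp⟩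
  refine ⟨⟨N, hPN, ?_⟩, hPN⟩
  rintro m ⟨hm2, hmc1, hmc2⟩
  rw [ceil_cond1] at hmc1
  rw [ceil_cond2] at hmc2
  by_contra hne
  rcases lt_or_gt_of_ne hne with h | h
  · -- m < N : then (N-2)(N-3) ≥ (m-1)(m-2) > 12g, contradiction with hlow
    have key : (m-1)*(m-2) ≤ (N-2)*(N-3) :=
      mul_le_mul (by linarith) (by linarith) (by linarith) (by linarith)
    linarith
  · have key : (N-1)*(N-2) ≤ (m-2)*(m-3) :=
      mul_le_mul (by linarith) (by linarith) (by linarith) (by linarith)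
    linarith
end

section
/- Let G be a connected graph with at least 3 vertices, 2-cell embedded on a surface Σ, and let v be a vertex with Euler contribution Φ(v) ≥ χ(Σ)/|G|, contained in exactly x triangular faces. Then d(v)/6 ≤ d(v)/4 - x/12 ≤ 1 - χ(Σ)/|G|. -/
open Finset in
/-- A control point `v` of degree `d` in a 2-cell embedding of a connected graph with
`m ≥ 3` vertices on a surface of Euler characteristic `χ`: the faces around `v` are
recorded by their sizes `sizes i ≥ 3` (one entry for each of the `d` angles at `v`),
`x` is the number of triangular faces (angles) at `v`, and the Euler contribution
`Φ(v) = 1 - d/2 + Σᵢ 1/(sizes i)` satisfies `Φ(v) ≥ χ/m`.  Then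
`d/6 ≤ d/4 - x/12 ≤ 1 - χ/m`. -/
theorem control_point_ineq (d m : ℕ) (hm : 3 ≤ m) (hd : 1 ≤ d) (χ : ℤ)
    (sizes : Fin d → ℕ) (hsz : ∀ i, 3 ≤ sizes i)
    (x : ℕ) (hx : x = (univ.filter fun i => sizes i = 3).card)
    (hΦ : (χ : ℝ) / (m : ℝ) ≤ 1 - (d : ℝ) / 2 + ∑ i, (1 : ℝ) / (sizes i : ℝ)) :
    (d : ℝ) / 6 ≤ (d : ℝ) / 4 - (x : ℝ) / 12 ∧
    (d : ℝ) / 4 - (x : ℝ) / 12 ≤ 1 - (χ : ℝ) / (m : ℝ) := by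
  have hxd : x ≤ d := by
    rw [hx]
    calc (univ.filter fun i => sizes i = 3).card ≤ (univ : Finset (Fin d)).card :=
          card_filter_le _ _
      _ = d := by simp
  have hsum : ∑ i, (1 : ℝ) / (sizes i : ℝ)
      ≤ ∑ i, (if sizes i = 3 then (1 : ℝ)/3 else 1/4) := by
    apply Finset.sum_le_sum
    intro i _
    by_cases h : sizes i = 3
    · simp [h]
    · simp only [h, if_false]
      have h4 : 4 ≤ sizes i := by have := hsz i; omega
      rw [div_le_div_iff₀ (by positivity) (by norm_num)]
      have : (4 : ℝ) ≤ (sizes i : ℝ) := by exact_mod_cast h4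
      linarith
  have hsplit : ∑ i, (if sizes i = 3 then (1 : ℝ)/3 else 1/4)
      = (x : ℝ) * (1/3) + ((d : ℝ) - x) * (1/4) := by
    rw [Finset.sum_ite, Finset.sum_const, Finset.sum_const, ← hx]
    have : (univ.filter fun i => ¬ sizes i = 3).card = d - x := by
      have := Finset.card_filter_add_card_filter_not
        (s := (univ : Finset (Fin d))) (p := fun i => sizes i = 3)
      simp only [card_univ, Fintype.card_fin] at this
      omega
    rw [this]
    rw [nsmul_eq_mul, nsmul_eq_mul, Nat.cast_sub hxd]
  rw [hsplit] at hsum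
  have hx' : (x : ℝ) ≤ d := by exact_mod_cast hxd
  constructor
  · linarith
  · linarith
end

section
/- If G is a connected k-extendable graph with at least 2k+2 vertices, then G is (k+1)-connected; in particular its minimum degree is at least k+1. -/
/-- A graph `G` is `k`-extendable if it has a perfect matching and every matching
consisting of `k` pairwise disjoint edges extends to a perfect matching. -/
def SimpleGraph.IsKExtendable {V : Type*} [Fintype V] (G : SimpleGraph V) (k : ℕ) : Prop :=
  (∃ M : G.Subgraph, M.IsPerfectMatching) ∧
  ∀ M : G.Subgraph, M.IsMatching → M.edgeSet.ncard = k →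
    ∃ P : G.Subgraph, P.IsPerfectMatching ∧ M ≤ P

/-- A graph `G` is an `(n,k)`-graph if `|G| ≥ n + 2k + 2`, `|G| ≡ n (mod 2)`, and
deleting any `n` vertices leaves a `k`-extendable graph. -/
def SimpleGraph.IsNKGraph {V : Type*} [Fintype V] [DecidableEq V]
    (G : SimpleGraph V) (n k : ℕ) : Prop :=
  n + 2 * k + 2 ≤ Fintype.card V ∧ Fintype.card V % 2 = n % 2 ∧
  ∀ S : Finset V, S.card = n →
    SimpleGraph.IsKExtendable (G.induce ((Sᶜ : Finset V) : Set V)) k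

/-!
Let `S` be a separator of minimum size `s ≤ k` with sides `A` and `B`; by minimality every
vertex of `S` has neighbours in both sides. For every perfect matching, `|B|` has the parity of
the number of vertices of `B` matched into `S`. If `s = 1`, the perfect matchings through an edge
from the cut vertex into `A` and through one into `B` give `|B|` both parities. If `s ≥ 2`,
delete an edge `uz` with `u ∈ S`, `z ∈ A`: then `G - u - z` is `(k-1)`-extendable and `S - u`
still separates it. For `s ≥ 3` the graph `G - u - z` is connected by minimality of `s`, and
induction on `k` applies; for `s = 2` the case `s = 1` applies in `G - u - z`, once `z` is
chosen so that the other vertex of `S` keeps a neighbour in `A - z` (otherwise `z` would be a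
cut vertex). A single edge lies in some perfect matching because it can be padded to `k` edges
with edges of a fixed perfect matching, which is where `|G| ≥ 2k + 2` is needed.
-/

lemma Fintype.card_coe_compl_pair {V : Type*} [Fintype V] [DecidableEq V] {u z : V}
    (huz : u ≠ z) :
    Fintype.card ((({u, z} : Finset V)ᶜ : Finset V) : Set V) + 2 = Fintype.card V := by
  simp only [Finset.coe_sort_coe, Fintype.card_coe, Finset.card_compl, Finset.card_pair huz]
  have := Finset.card_le_univ ({u, z} : Finset V)
  rw [Finset.card_pair huz] at this
  omega

namespace SimpleGraph

variable {V : Type*} {G : SimpleGraph V}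

namespace Subgraph

lemma IsMatching.sup_subgraphOfAdj {M : G.Subgraph} (hM : M.IsMatching) {x y : V}
    (hxy : G.Adj x y) (hx : x ∉ M.verts) (hy : y ∉ M.verts) :
    (M ⊔ G.subgraphOfAdj hxy).IsMatching := by
  refine hM.sup (.subgraphOfAdj hxy) ?_
  rw [hM.support_eq_verts, support_subgraphOfAdj]
  exact Set.disjoint_right.2 (by rintro _ (rfl | rfl) <;> assumption)

lemma ncard_edgeSet_sup_subgraphOfAdj [Finite V] {M : G.Subgraph} {x y : V} (hxy : G.Adj x y)
    (hx : x ∉ M.verts) : (M ⊔ G.subgraphOfAdj hxy).edgeSet.ncard = M.edgeSet.ncard + 1 := by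
  rw [edgeSet_sup, edgeSet_subgraphOfAdj, Set.ncard_union_eq, Set.ncard_singleton]
  exact Set.disjoint_singleton_right.2 fun h => hx (M.edge_vert h)

lemma IsMatching.adj_mem_insert_insert [DecidableEq V] {P : G.Subgraph} (hP : P.IsMatching)
    {U : Finset V} (hU : ∀ a ∈ U, ∀ b, P.Adj a b → b ∈ U) {x y : V} (hxy : P.Adj x y) :
    ∀ a ∈ insert x (insert y U), ∀ b, P.Adj a b → b ∈ insert x (insert y U) := by
  intro a ha b hab
  simp only [Finset.mem_insert] at ha ⊢
  rcases ha with rfl | rfl | ha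
  · exact .inr (.inl (hP.eq_of_adj_left hab hxy))
  · exact .inl (hP.eq_of_adj_left hab hxy.symm)
  · exact .inr (.inr (hU a ha b hab))

lemma IsPerfectMatching.even_card_of_forall_adj_mem {Q : G.Subgraph} (hQ : Q.IsPerfectMatching)
    {T : Finset V} (hT : ∀ x ∈ T, ∀ y, Q.Adj x y → y ∈ T) : Even T.card := by
  classical
  have hTQ : (Q.induce T).IsMatching := by
    intro v hv
    obtain ⟨w, hvw, huniq⟩ := hQ.1 (hQ.2 v)
    exact ⟨w, ⟨hv, hT v hv w hvw, hvw⟩, fun y hy => huniq y hy.2.2⟩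
  have : Fintype (Q.induce T).verts := inferInstanceAs (Fintype (T : Set V))
  simpa using hTQ.even_card

/-- `Q` matches `B` within itself, except for the partner `w` of `v` when `w ∈ B`. -/
lemma IsPerfectMatching.even_card_iff [DecidableEq V] {Q : G.Subgraph}
    (hQ : Q.IsPerfectMatching) {B : Finset V} {v w : V} (hvB : v ∉ B)
    (hB : ∀ b ∈ B, ∀ x, G.Adj b x → x = v ∨ x ∈ B) (hvw : Q.Adj v w) :
    Even B.card ↔ w ∉ B := by
  have hQB : ∀ b ∈ B, ∀ x, Q.Adj b x → x = v ∧ b = w ∨ x ∈ B := fun b hb x hbx =>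
    (hB b hb x (Q.adj_sub hbx)).imp_left
      fun hxv => ⟨hxv, hQ.1.eq_of_adj_right (hxv ▸ hbx) hvw.symm⟩
  constructor
  · intro hev hwB
    have hodd : Even (B.erase w).card := hQ.even_card_of_forall_adj_mem fun b hb x hbx => by
      obtain ⟨hbw, hbB⟩ := Finset.mem_erase.1 hb
      obtain h | hx := hQB b hbB x hbx
      · exact absurd h.2 hbw
      · refine Finset.mem_erase.2 ⟨?_, hx⟩
        rintro rfl
        exact hvB (hQ.1.eq_of_adj_right hbx hvw ▸ hbB)
    rw [← Finset.card_erase_add_one hwB] at hev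
    exact Nat.even_add_one.1 hev hodd
  · intro hwB
    exact hQ.even_card_of_forall_adj_mem fun b hb x hbx =>
      (hQB b hb x hbx).resolve_left fun h => hwB (h.2 ▸ hb)

lemma IsPerfectMatching.comap_induce {Q : G.Subgraph} (hQ : Q.IsPerfectMatching) {W : Set V}
    (hW : ∀ x ∈ W, ∀ y, Q.Adj x y → y ∈ W) :
    (Q.comap (Embedding.induce W).toHom).IsPerfectMatching := by
  rw [isPerfectMatching_iff]
  rintro ⟨x, hx⟩
  obtain ⟨y, hxy, huniq⟩ := hQ.1 (hQ.2 x)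
  exact ⟨⟨y, hW x hx y hxy⟩, ⟨Q.adj_sub hxy, hxy⟩,
    fun z hz => Subtype.ext (huniq _ hz.2)⟩

end Subgraph


structure IsSeparation (G : SimpleGraph V) (S A B : Finset V) : Prop where
  nonempty_left : A.Nonempty
  nonempty_right : B.Nonempty
  disjoint_left : Disjoint S A
  disjoint_right : Disjoint S B
  disjoint_left_right : Disjoint A B
  mem_or_mem_or_mem : ∀ x, x ∈ S ∨ x ∈ A ∨ x ∈ B
  not_adj : ∀ a ∈ A, ∀ b ∈ B, ¬ G.Adj a b

namespace IsSeparation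

variable {S A B : Finset V}

lemma symm (h : G.IsSeparation S A B) : G.IsSeparation S B A where
  nonempty_left := h.nonempty_right
  nonempty_right := h.nonempty_left
  disjoint_left := h.disjoint_right
  disjoint_right := h.disjoint_left
  disjoint_left_right := h.disjoint_left_right.symm
  mem_or_mem_or_mem x := by have := h.mem_or_mem_or_mem x; tauto
  not_adj b hb a ha hba := h.not_adj a ha b hb hba.symm

lemma mem_or_mem_of_adj (h : G.IsSeparation S A B) {b x : V} (hb : b ∈ B) (hbx : G.Adj b x) :
    x ∈ S ∨ x ∈ B := by
  obtain hx | hx | hx := h.mem_or_mem_or_mem x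
  · exact .inl hx
  · exact absurd hbx.symm (h.not_adj x hx b hb)
  · exact .inr hx

lemma card_add_card_add_card [Fintype V] [DecidableEq V] (h : G.IsSeparation S A B) :
    S.card + A.card + B.card = Fintype.card V := by
  rw [← Finset.card_union_of_disjoint h.disjoint_left,
    ← Finset.card_union_of_disjoint
      (Finset.disjoint_union_left.2 ⟨h.disjoint_right, h.disjoint_left_right⟩),
    ← Finset.card_univ]
  congr 1
  exact Finset.eq_univ_of_forall fun x => by simpa [or_assoc] using h.mem_or_mem_or_mem x

lemma nonempty_of_connected (h : G.IsSeparation S A B) (hG : G.Connected) : S.Nonempty := by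
  by_contra hS
  rw [Finset.not_nonempty_iff_eq_empty] at hS
  obtain ⟨a, ha⟩ := h.nonempty_left
  obtain ⟨b, hb⟩ := h.nonempty_right
  obtain ⟨p⟩ := hG.preconnected b a
  suffices ∀ {x y : V} (p : G.Walk x y), x ∈ B → y ∈ B from
    Finset.disjoint_left.1 h.disjoint_left_right ha (this p hb)
  intro x y p
  induction p with
  | nil => exact id
  | cons hxz _ ih =>
    exact fun hx => ih ((h.mem_or_mem_of_adj hx hxz).resolve_left (by simp [hS]))

lemma erase [DecidableEq V] (h : G.IsSeparation S A B) {w : V} (hw : w ∈ S)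
    (hwA : ∀ a ∈ A, ¬ G.Adj w a) : G.IsSeparation (S.erase w) A (insert w B) where
  nonempty_left := h.nonempty_left
  nonempty_right := Finset.insert_nonempty _ _
  disjoint_left := h.disjoint_left.mono_left (Finset.erase_subset _ _)
  disjoint_right := Finset.disjoint_insert_right.2
    ⟨Finset.notMem_erase _ _, h.disjoint_right.mono_left (Finset.erase_subset _ _)⟩
  disjoint_left_right := Finset.disjoint_insert_right.2
    ⟨Finset.disjoint_left.1 h.disjoint_left hw, h.disjoint_left_right⟩
  mem_or_mem_or_mem x := by
    obtain hx | hx | hx := h.mem_or_mem_or_mem x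
    · by_cases hxw : x = w
      · exact .inr (.inr (Finset.mem_insert.2 (.inl hxw)))
      · exact .inl (Finset.mem_erase.2 ⟨hxw, hx⟩)
    · exact .inr (.inl hx)
    · exact .inr (.inr (Finset.mem_insert_of_mem hx))
  not_adj a ha b hb hab := by
    obtain rfl | hb := Finset.mem_insert.1 hb
    · exact hwA a ha hab.symm
    · exact h.not_adj a ha b hb hab

lemma singleton_of_forall_adj_eq [DecidableEq V] (h : G.IsSeparation S A B) {z : V}
    (hz : z ∈ A) (hA : (A.erase z).Nonempty)
    (hS : ∀ w ∈ S, ∀ a ∈ A, G.Adj w a → a = z) :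
    G.IsSeparation {z} (A.erase z) (S ∪ B) where
  nonempty_left := hA
  nonempty_right := h.nonempty_right.mono Finset.subset_union_right
  disjoint_left := by simp
  disjoint_right := Finset.disjoint_singleton_left.2 <| Finset.notMem_union.2
    ⟨fun hzS => Finset.disjoint_left.1 h.disjoint_left hzS hz,
      Finset.disjoint_left.1 h.disjoint_left_right hz⟩
  disjoint_left_right := Finset.disjoint_union_right.2
    ⟨(h.disjoint_left.mono_right (Finset.erase_subset _ _)).symm,
      h.disjoint_left_right.mono_left (Finset.erase_subset _ _)⟩
  mem_or_mem_or_mem x := by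
    obtain hx | hx | hx := h.mem_or_mem_or_mem x
    · exact .inr (.inr (Finset.mem_union_left _ hx))
    · by_cases hxz : x = z
      · exact .inl (Finset.mem_singleton.2 hxz)
      · exact .inr (.inl (Finset.mem_erase.2 ⟨hxz, hx⟩))
    · exact .inr (.inr (Finset.mem_union_right _ hx))
  not_adj a ha x hx hax := by
    obtain ⟨haz, ha⟩ := Finset.mem_erase.1 ha
    obtain hx | hx := Finset.mem_union.1 hx
    · exact haz (hS x hx a ha hax.symm)
    · exact h.not_adj a ha x hx hax

lemma induce (h : G.IsSeparation S A B) (W : Set V) [DecidablePred (· ∈ W)] {a b : V}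
    (ha : a ∈ A) (haW : a ∈ W) (hb : b ∈ B) (hbW : b ∈ W) :
    (G.induce W).IsSeparation (S.subtype (· ∈ W)) (A.subtype (· ∈ W))
      (B.subtype (· ∈ W)) where
  nonempty_left := ⟨⟨a, haW⟩, by simpa using ha⟩
  nonempty_right := ⟨⟨b, hbW⟩, by simpa using hb⟩
  disjoint_left := Finset.disjoint_left.2 fun x hS hA => by
    simp only [Finset.mem_subtype] at hS hA
    exact Finset.disjoint_left.1 h.disjoint_left hS hA
  disjoint_right := Finset.disjoint_left.2 fun x hS hB => by
    simp only [Finset.mem_subtype] at hS hB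
    exact Finset.disjoint_left.1 h.disjoint_right hS hB
  disjoint_left_right := Finset.disjoint_left.2 fun x hA hB => by
    simp only [Finset.mem_subtype] at hA hB
    exact Finset.disjoint_left.1 h.disjoint_left_right hA hB
  mem_or_mem_or_mem x := by simpa only [Finset.mem_subtype] using h.mem_or_mem_or_mem x
  not_adj x hA y hB := by
    simp only [Finset.mem_subtype] at hA hB
    exact h.not_adj _ hA _ hB

lemma exists_minimal (h : G.IsSeparation S A B) :
    ∃ S' A' B', G.IsSeparation S' A' B' ∧ S'.card ≤ S.card ∧
      ∀ S'' A'' B'', G.IsSeparation S'' A'' B'' → S'.card ≤ S''.card := by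
  classical
  have hex : ∃ n S' A' B', G.IsSeparation S' A' B' ∧ S'.card = n := ⟨_, S, A, B, h, rfl⟩
  obtain ⟨S', A', B', h', hS'⟩ := Nat.find_spec hex
  exact ⟨S', A', B', h', hS' ▸ Nat.find_min' hex ⟨S, A, B, h, rfl⟩,
    fun S'' A'' B'' h'' => hS' ▸ Nat.find_min' hex ⟨S'', A'', B'', h'', rfl⟩⟩

lemma exists_adj_left_of_minimal [DecidableEq V] (h : G.IsSeparation S A B)
    (hmin : ∀ S' A' B', G.IsSeparation S' A' B' → S.card ≤ S'.card) {w : V} (hw : w ∈ S) :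
    ∃ a ∈ A, G.Adj w a := by
  by_contra! hwA
  have := hmin _ _ _ (h.erase hw hwA)
  rw [Finset.card_erase_of_mem hw] at this
  have := Finset.card_pos.2 ⟨w, hw⟩
  omega

lemma exists_adj_adj_of_minimal [DecidableEq V] {u v : V} (h : G.IsSeparation {u, v} A B)
    (hmin : ∀ S' A' B', G.IsSeparation S' A' B' → 2 ≤ S'.card) (hA : 1 < A.card) :
    ∃ z ∈ A, ∃ a ∈ A, a ≠ z ∧
      (G.Adj u z ∧ G.Adj v a ∨ G.Adj v z ∧ G.Adj u a) := by
  have hmin' : ∀ S' A' B', G.IsSeparation S' A' B' → ({u, v} : Finset V).card ≤ S'.card :=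
    fun S' A' B' h' => Finset.card_le_two.trans (hmin S' A' B' h')
  have hu : u ∈ ({u, v} : Finset V) := Finset.mem_insert_self u _
  have hv : v ∈ ({u, v} : Finset V) := Finset.mem_insert_of_mem (Finset.mem_singleton_self v)
  obtain ⟨z, hz, huz⟩ := h.exists_adj_left_of_minimal hmin' hu
  by_cases hva : ∃ a ∈ A, a ≠ z ∧ G.Adj v a
  · obtain ⟨a, ha, haz, hva⟩ := hva
    exact ⟨z, hz, a, ha, haz, .inl ⟨huz, hva⟩⟩
  by_cases hua : ∃ a ∈ A, a ≠ z ∧ G.Adj u a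
  · obtain ⟨a, ha, haz, hua⟩ := hua
    obtain ⟨a', ha', hva'⟩ := h.exists_adj_left_of_minimal hmin' hv
    obtain rfl : a' = z := by_contra fun hne => hva ⟨a', ha', hne, hva'⟩
    exact ⟨a', ha', a, ha, haz, .inr ⟨hva', hua⟩⟩
  have hS : ∀ w ∈ ({u, v} : Finset V), ∀ a ∈ A, G.Adj w a → a = z := by
    intro w hw a ha hwa
    by_contra hne
    obtain rfl | rfl := Finset.mem_insert.1 hw |>.imp_right Finset.mem_singleton.1
    · exact hua ⟨a, ha, hne, hwa⟩
    · exact hva ⟨a, ha, hne, hwa⟩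
  have hAz : (A.erase z).Nonempty :=
    Finset.card_pos.1 (by rw [Finset.card_erase_of_mem hz]; omega)
  simpa using hmin _ _ _ (h.singleton_of_forall_adj_eq hz hAz hS)

end IsSeparation

lemma exists_isSeparation_of_not_connected [Fintype V] [DecidableEq V] {W : Finset V}
    (hW : W.Nonempty) (h : ¬ (G.induce (W : Set V)).Connected) :
    ∃ A B, G.IsSeparation Wᶜ A B := by
  classical
  obtain ⟨w, hw⟩ := hW
  have : Nonempty (W : Set V) := ⟨⟨w, hw⟩⟩
  obtain ⟨x, y, hxy⟩ : ∃ x y : (W : Set V), ¬ (G.induce (W : Set V)).Reachable x y := by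
    by_contra! hr
    exact h ⟨hr⟩
  set A := W.filter fun v => ∃ hv : v ∈ W, (G.induce (W : Set V)).Reachable x ⟨v, hv⟩
  have hA : ∀ v (hv : v ∈ W), v ∈ A ↔ (G.induce (W : Set V)).Reachable x ⟨v, hv⟩ := by
    intro v hv
    simp [A, hv]
  refine ⟨A, W \ A, ⟨x, (hA x x.2).2 .rfl⟩, ⟨y, Finset.mem_sdiff.2 ⟨y.2, ?_⟩⟩, ?_, ?_,
    Finset.disjoint_sdiff, fun v => ?_, ?_⟩
  · rwa [hA y y.2]
  · exact Finset.disjoint_left.2 fun v hv hvA => Finset.mem_compl.1 hv (Finset.mem_filter.1 hvA).1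
  · exact Finset.disjoint_left.2 fun v hv hvB => Finset.mem_compl.1 hv (Finset.mem_sdiff.1 hvB).1
  · by_cases hv : v ∈ W
    · by_cases hvA : v ∈ A
      · exact .inr (.inl hvA)
      · exact .inr (.inr (Finset.mem_sdiff.2 ⟨hv, hvA⟩))
    · exact .inl (Finset.mem_compl.2 hv)
  · intro a ha b hb hab
    obtain ⟨hbW, hbA⟩ := Finset.mem_sdiff.1 hb
    have haW := (Finset.mem_filter.1 ha).1
    have hab' : (G.induce (W : Set V)).Adj ⟨a, haW⟩ ⟨b, hbW⟩ := hab
    exact hbA ((hA b hbW).2 (((hA a haW).1 ha).trans hab'.reachable))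

namespace IsKExtendable

variable [Fintype V] [DecidableEq V] {k : ℕ}

/-- The missing `t` edges are taken from `P` outside `U`. -/
theorem exists_isPerfectMatching_ge (hG : G.IsKExtendable k) {P : G.Subgraph}
    (hP : P.IsPerfectMatching) {M : G.Subgraph} {U : Finset V} (hM : M.IsMatching)
    (hMU : M.verts ⊆ U) (hU : ∀ x ∈ U, ∀ y, P.Adj x y → y ∈ U) {t : ℕ}
    (hMk : M.edgeSet.ncard + t = k) (hcard : U.card + 2 * t ≤ Fintype.card V) :
    ∃ Q : G.Subgraph, Q.IsPerfectMatching ∧ M ≤ Q := by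
  induction t generalizing M U with
  | zero => exact hG.2 M hM hMk
  | succ t ih =>
    obtain ⟨x, hxU⟩ : ∃ x, x ∉ U := by
      by_contra! h
      rw [Finset.eq_univ_of_forall h, Finset.card_univ] at hcard
      omega
    obtain ⟨y, hxy, -⟩ := hP.1 (hP.2 x)
    have hyU : y ∉ U := fun hy => hxU (hU y hy x hxy.symm)
    have hxM : x ∉ M.verts := fun h => hxU (hMU h)
    have hyM : y ∉ M.verts := fun h => hyU (hMU h)
    have hMU' : (M ⊔ G.subgraphOfAdj (P.adj_sub hxy)).verts ⊆ ↑(insert x (insert y U)) := by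
      simp only [Subgraph.verts_sup, subgraphOfAdj_verts, Finset.coe_insert]
      exact Set.union_subset (hMU.trans ((Set.subset_insert _ _).trans (Set.subset_insert _ _)))
        (Set.insert_subset_insert (Set.singleton_subset_iff.2 (Set.mem_insert _ _)))
    have hcard' : (insert x (insert y U)).card ≤ U.card + 2 :=
      (Finset.card_insert_le _ _).trans (Nat.succ_le_succ (Finset.card_insert_le _ _))
    obtain ⟨Q, hQ, hle⟩ := ih (hM.sup_subgraphOfAdj (P.adj_sub hxy) hxM hyM) hMU'
      (hP.1.adj_mem_insert_insert hU hxy)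
      (by rw [Subgraph.ncard_edgeSet_sup_subgraphOfAdj _ hxM]; omega) (by omega)
    exact ⟨Q, hQ, le_sup_left.trans hle⟩

theorem exists_isPerfectMatching_adj (hG : G.IsKExtendable (k + 1))
    (hcard : 2 * k + 4 ≤ Fintype.card V) {x y : V} (hxy : G.Adj x y) :
    ∃ Q : G.Subgraph, Q.IsPerfectMatching ∧ Q.Adj x y := by
  obtain ⟨P, hP⟩ := hG.1
  obtain ⟨x', hxx', -⟩ := hP.1 (hP.2 x)
  obtain ⟨y', hyy', -⟩ := hP.1 (hP.2 y)
  have hU : ∀ a ∈ ({x, x', y, y'} : Finset V), ∀ b, P.Adj a b →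
      b ∈ ({x, x', y, y'} : Finset V) :=
    hP.1.adj_mem_insert_insert (hP.1.adj_mem_insert_insert (U := ∅) (by simp) hyy') hxx'
  obtain ⟨Q, hQ, hle⟩ := hG.exists_isPerfectMatching_ge hP (M := G.subgraphOfAdj hxy)
    (.subgraphOfAdj hxy) (by simp [Set.insert_subset_iff]) hU (t := k)
    (by simp [edgeSet_subgraphOfAdj]; omega)
    (by have := Finset.card_le_four (a := x) (b := x') (c := y) (d := y'); omega)
  exact ⟨Q, hQ, hle.2 (by simp)⟩

theorem not_isSeparation_singleton (hG : G.IsKExtendable (k + 1))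
    (hcard : 2 * k + 4 ≤ Fintype.card V) {A B : Finset V} {v a b : V}
    (h : G.IsSeparation {v} A B) (ha : a ∈ A) (hva : G.Adj v a) (hb : b ∈ B)
    (hvb : G.Adj v b) : False := by
  have hvB : v ∉ B := Finset.disjoint_singleton_left.1 h.disjoint_right
  have hB : ∀ x ∈ B, ∀ y, G.Adj x y → y = v ∨ y ∈ B := fun x hx y hxy => by
    simpa using h.mem_or_mem_of_adj hx hxy
  obtain ⟨Q₁, hQ₁, hva⟩ := hG.exists_isPerfectMatching_adj hcard hva
  obtain ⟨Q₂, hQ₂, hvb⟩ := hG.exists_isPerfectMatching_adj hcard hvb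
  have haB : a ∉ B := Finset.disjoint_left.1 h.disjoint_left_right ha
  exact (hQ₂.even_card_iff hvB hB hvb).1 ((hQ₁.even_card_iff hvB hB hva).2 haB) hb

theorem induce_compl_pair (hG : G.IsKExtendable (k + 1)) (hcard : 2 * k + 4 ≤ Fintype.card V)
    {u z : V} (huz : G.Adj u z) :
    (G.induce ((({u, z} : Finset V)ᶜ : Finset V) : Set V)).IsKExtendable k := by
  set W : Finset V := {u, z}ᶜ
  have hW : ∀ {Q : G.Subgraph}, Q.IsMatching → Q.Adj u z →
      ∀ x ∈ (W : Set V), ∀ y, Q.Adj x y → y ∈ (W : Set V) := by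
    intro Q hQ hQuz x hx y hxy
    simp only [W, Finset.coe_compl, Finset.coe_insert, Finset.coe_singleton, Set.mem_compl_iff,
      Set.mem_insert_iff, Set.mem_singleton_iff, not_or] at hx ⊢
    constructor
    · rintro rfl
      exact hx.2 (hQ.eq_of_adj_left hxy.symm hQuz)
    · rintro rfl
      exact hx.1 (hQ.eq_of_adj_left hxy.symm hQuz.symm)
  refine ⟨?_, fun M hM hMk => ?_⟩
  · obtain ⟨Q, hQ, hQuz⟩ := hG.exists_isPerfectMatching_adj hcard huz
    exact ⟨_, hQ.comap_induce (hW hQ.1 hQuz)⟩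
  set f : G.induce (W : Set V) →g G := (Embedding.induce (W : Set V)).toHom
  have hf : Function.Injective f := Subtype.val_injective
  have hMW : ∀ x ∈ (M.map f).verts, x ∈ (W : Set V) := by
    rintro _ ⟨x, -, rfl⟩
    exact x.2
  have hu : u ∉ (M.map f).verts := fun hu => by simpa [W] using hMW u hu
  have hz : z ∉ (M.map f).verts := fun hz => by simpa [W] using hMW z hz
  have hMk' : (M.map f).edgeSet.ncard = k := by
    rw [Subgraph.edgeSet_map, Set.ncard_image_of_injective _ (Sym2.map.injective hf), hMk]
  obtain ⟨Q, hQ, hle⟩ := hG.2 _ ((hM.map f hf).sup_subgraphOfAdj huz hu hz)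
    (by rw [Subgraph.ncard_edgeSet_sup_subgraphOfAdj huz hu, hMk'])
  have hQuz : Q.Adj u z := hle.2 (by simp)
  exact ⟨_, hQ.comap_induce (hW hQ.1 hQuz),
    (Subgraph.map_le_iff_le_comap _ _ _).1 (le_sup_left.trans hle)⟩

theorem not_isSeparation_pair (hG : G.IsKExtendable (k + 2))
    (hcard : 2 * k + 6 ≤ Fintype.card V) {A B : Finset V} {u v z a b : V}
    (h : G.IsSeparation {u, v} A B) (huv : u ≠ v) (hz : z ∈ A) (huz : G.Adj u z)
    (ha : a ∈ A) (haz : a ≠ z) (hva : G.Adj v a) (hb : b ∈ B) (hvb : G.Adj v b) : False := by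
  have hu : u ∈ ({u, v} : Finset V) := Finset.mem_insert_self u _
  have hcardW := Fintype.card_coe_compl_pair huz.ne
  set W : Finset V := {u, z}ᶜ
  have hvW : v ∈ (W : Set V) := by
    simpa [W, huv.symm] using Finset.disjoint_iff_ne.1 h.disjoint_left v (by simp) z hz
  have haW : a ∈ (W : Set V) := by
    simpa [W, haz] using (Finset.disjoint_iff_ne.1 h.disjoint_left u hu a ha).symm
  have hbW : b ∈ (W : Set V) := by
    simpa [W] using ⟨(Finset.disjoint_iff_ne.1 h.disjoint_left_right z hz b hb).symm,
      (Finset.disjoint_iff_ne.1 h.disjoint_right u hu b hb).symm⟩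
  have hS' : ({u, v} : Finset V).subtype (· ∈ (W : Set V)) = {⟨v, hvW⟩} := by
    ext ⟨x, hx⟩
    simp only [W, Finset.coe_compl, Set.mem_compl_iff, Finset.mem_coe, Finset.mem_insert,
      Finset.mem_singleton, not_or] at hx
    simp [hx.1]
  have h' := hS' ▸ h.induce _ ha haW hb hbW
  have hG' : (G.induce (W : Set V)).IsKExtendable (k + 1) := hG.induce_compl_pair (by omega) huz
  exact hG'.not_isSeparation_singleton (by omega) h'
    (a := ⟨a, haW⟩) (by simpa using ha) hva (b := ⟨b, hbW⟩) (by simpa using hb) hvb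

theorem not_isSeparation_of_card_eq_two (hG : G.IsKExtendable (k + 2))
    (hcard : 2 * k + 6 ≤ Fintype.card V) {S A B : Finset V} (h : G.IsSeparation S A B)
    (hmin : ∀ S' A' B', G.IsSeparation S' A' B' → S.card ≤ S'.card) (hS : S.card = 2)
    (hA : 1 < A.card) : False := by
  obtain ⟨u, v, huv, rfl⟩ := Finset.card_eq_two.1 hS
  obtain ⟨z, hz, a, ha, haz, ⟨huz, hva⟩ | ⟨hvz, hua⟩⟩ :=
    h.exists_adj_adj_of_minimal (fun S' A' B' h' => hS ▸ hmin S' A' B' h') hA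
  · obtain ⟨b, hb, hvb⟩ := h.symm.exists_adj_left_of_minimal hmin
      (Finset.mem_insert_of_mem (Finset.mem_singleton_self v))
    exact hG.not_isSeparation_pair hcard h huv hz huz ha haz hva hb hvb
  · obtain ⟨b, hb, hub⟩ := h.symm.exists_adj_left_of_minimal hmin (Finset.mem_insert_self u _)
    exact hG.not_isSeparation_pair hcard (Finset.pair_comm u v ▸ h) huv.symm hz hvz ha haz hua
      hb hub

theorem exists_isSeparation_induce_of_three_le_card (hG : G.IsKExtendable (k + 1))
    (hcard : 2 * k + 4 ≤ Fintype.card V) {S A B : Finset V} (h : G.IsSeparation S A B)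
    (hmin : ∀ S' A' B', G.IsSeparation S' A' B' → S.card ≤ S'.card) (hS : 3 ≤ S.card)
    (hA : 1 < A.card) :
    ∃ (W : Finset V) (S' A' B' : Finset (W : Set V)), (G.induce (W : Set V)).Connected ∧
      (G.induce (W : Set V)).IsKExtendable k ∧ 2 * k + 2 ≤ Fintype.card (W : Set V) ∧
      (G.induce (W : Set V)).IsSeparation S' A' B' ∧ S'.card < S.card := by
  obtain ⟨u, hu⟩ := Finset.card_pos.1 (by omega : 0 < S.card)
  obtain ⟨z, hz, huz⟩ := h.exists_adj_left_of_minimal hmin hu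
  obtain ⟨a, ha, haz⟩ := Finset.exists_mem_ne hA z
  obtain ⟨b, hb⟩ := h.nonempty_right
  have hcardW := Fintype.card_coe_compl_pair huz.ne
  set W : Finset V := {u, z}ᶜ
  have haW : a ∈ (W : Set V) := by
    simpa [W, haz] using (Finset.disjoint_iff_ne.1 h.disjoint_left u hu a ha).symm
  have hbW : b ∈ (W : Set V) := by
    simpa [W] using ⟨(Finset.disjoint_iff_ne.1 h.disjoint_left_right z hz b hb).symm,
      (Finset.disjoint_iff_ne.1 h.disjoint_right u hu b hb).symm⟩
  have hconn : (G.induce (W : Set V)).Connected := by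
    by_contra hc
    obtain ⟨A', B', h'⟩ := exists_isSeparation_of_not_connected
      (Finset.card_pos.1 (by rw [Finset.card_compl, Finset.card_pair huz.ne]; omega)) hc
    have := hmin _ _ _ h'
    rw [compl_compl, Finset.card_pair huz.ne] at this
    omega
  exact ⟨W, _, _, _, hconn, hG.induce_compl_pair hcard huz, by omega,
    h.induce _ ha haW hb hbW, by
      rw [Finset.card_subtype]
      exact Finset.card_lt_card (Finset.filter_ssubset.2 ⟨u, hu, by simp [W]⟩)⟩

theorem lt_card_of_isSeparation (hG : G.IsKExtendable k) (hconn : G.Connected)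
    (hcard : 2 * k + 2 ≤ Fintype.card V) {S A B : Finset V} (h : G.IsSeparation S A B) :
    k < S.card := by
  induction k generalizing V with
  | zero => exact Finset.card_pos.2 (h.nonempty_of_connected hconn)
  | succ k ih =>
    by_contra! hSk
    obtain ⟨S, A, B, h, hSS, hmin⟩ := h.exists_minimal
    wlog hA : 1 < A.card generalizing A B with H
    · refine H B A h.symm ?_
      have := h.card_add_card_add_card
      have := Finset.card_pos.2 h.nonempty_right
      omega
    have hS := Finset.card_pos.2 (h.nonempty_of_connected hconn)
    obtain hS1 | hS2 | hS3 : S.card = 1 ∨ S.card = 2 ∨ 3 ≤ S.card := by omega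
    · obtain ⟨v, rfl⟩ := Finset.card_eq_one.1 hS1
      obtain ⟨a, ha, hva⟩ := h.exists_adj_left_of_minimal hmin (Finset.mem_singleton_self v)
      obtain ⟨b, hb, hvb⟩ :=
        h.symm.exists_adj_left_of_minimal hmin (Finset.mem_singleton_self v)
      exact hG.not_isSeparation_singleton (by omega) h ha hva hb hvb
    · obtain ⟨k, rfl⟩ : ∃ k', k = k' + 1 := ⟨k - 1, by omega⟩
      exact hG.not_isSeparation_of_card_eq_two (by omega) h hmin hS2 hA
    · obtain ⟨W, S', A', B', hconn', hG', hcard', h', hS'⟩ :=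
        hG.exists_isSeparation_induce_of_three_le_card (by omega) h hmin hS3 hA
      have := ih hG' hconn' hcard' h'
      omega

theorem connected_induce_compl (hG : G.IsKExtendable k) (hconn : G.Connected)
    (hcard : 2 * k + 2 ≤ Fintype.card V) {S : Finset V} (hS : S.card ≤ k) :
    (G.induce ((Sᶜ : Finset V) : Set V)).Connected := by
  by_contra hc
  obtain ⟨A, B, h⟩ := exists_isSeparation_of_not_connected
    (Finset.card_pos.1 (by rw [Finset.card_compl]; omega)) hc
  rw [compl_compl] at h
  exact (hG.lt_card_of_isSeparation hconn hcard h).not_ge hS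

end IsKExtendable

theorem le_minDegree_of_forall_connected_induce_compl [Fintype V] [DecidableEq V]
    [DecidableRel G.Adj] {k : ℕ} (hcard : k + 1 < Fintype.card V)
    (h : ∀ S : Finset V, S.card ≤ k → (G.induce ((Sᶜ : Finset V) : Set V)).Connected) :
    k + 1 ≤ G.minDegree := by
  by_contra! hlt
  have : Nonempty V := Fintype.card_pos_iff.1 (by omega)
  obtain ⟨v, hv⟩ := G.exists_minimal_degree_vertex
  set S := G.neighborFinset v
  have hS : S.card ≤ k := by rw [G.card_neighborFinset_eq_degree, ← hv]; omega
  have hvS : v ∈ Sᶜ := by simp [S]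
  obtain ⟨w, hw, hwv⟩ := Finset.exists_mem_ne (s := Sᶜ) (by rw [Finset.card_compl]; omega) v
  obtain ⟨p⟩ := (h S hS).preconnected ⟨v, hvS⟩ ⟨w, hw⟩
  by_cases hp : p.Nil
  · exact hwv (congrArg Subtype.val hp.eq).symm
  · have := p.snd.2
    simp only [Finset.coe_compl, Set.mem_compl_iff, Finset.mem_coe, S,
      mem_neighborFinset] at this
    exact this (p.adj_snd hp)

end SimpleGraph

/-- A connected `k`-extendable graph on at least `2k+2` vertices is `(k+1)`-connected
(removing any at most `k` vertices leaves a connected graph, and `|G| > k+1`);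
in particular its minimum degree is at least `k+1`. -/
theorem kExtendable_connectivity {V : Type*} [Fintype V] [DecidableEq V]
    (G : SimpleGraph V) [DecidableRel G.Adj] (k : ℕ)
    (hconn : G.Connected) (h : G.IsKExtendable k) (hcard : 2 * k + 2 ≤ Fintype.card V) :
    (k + 1 < Fintype.card V ∧
      ∀ S : Finset V, S.card ≤ k → (G.induce ((Sᶜ : Finset V) : Set V)).Connected) ∧
    k + 1 ≤ G.minDegree := by
  have hcut := fun (S : Finset V) (hS : S.card ≤ k) => h.connected_induce_compl hconn hcard hS
  exact ⟨⟨by omega, hcut⟩,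
    SimpleGraph.le_minDegree_of_forall_connected_induce_compl (by omega) hcut⟩
end

section
/- Let n ≥ 0, k ≥ 1, and let G be a connected (n,k)-graph. If v is a vertex of G whose neighborhood contains a k-matching, then d(v) ≥ n + 2k + 1. -/
/-! If `d(v) ≤ n + 2k`, delete `n` vertices that avoid `v` and the set `A` of the `2k` matched
neighbours but contain every other neighbour of `v`; this is possible since `|G| ≥ n + 2k + 2`.
In the remaining `k`-extendable graph the `k` edges inside `A` extend to a perfect matching,
which has to match `v` to a vertex of `A`, although every vertex of `A` is already matched
inside `A`. -/

open Function Finset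

namespace SimpleGraph

variable {V : Type*} {G : SimpleGraph V}

theorem exists_isMatching_verts_eq_range {ι : Type*} [Finite ι] {f : ι × Bool → V}
    (hf : Injective f) (hadj : ∀ i, G.Adj (f (i, true)) (f (i, false))) :
    ∃ M : G.Subgraph, M.IsMatching ∧ M.edgeSet.ncard = Nat.card ι ∧ M.verts = Set.range f := by
  have hne : ∀ {i j : ι} {b c : Bool}, f (i, b) = f (j, c) → i = j ∧ b = c := fun h =>
    Prod.ext_iff.mp (hf h)
  refine ⟨⨆ i, G.subgraphOfAdj (hadj i), ?_, ?_, ?_⟩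
  · refine Subgraph.IsMatching.iSup (fun i => .subgraphOfAdj _) fun i j hij => ?_
    simp only [support_subgraphOfAdj, Set.disjoint_left, Set.mem_insert_iff,
      Set.mem_singleton_iff]
    rintro _ (rfl | rfl) (h | h) <;> exact hij (hne h).1
  · have hedges : (⨆ i, G.subgraphOfAdj (hadj i)).edgeSet =
        Set.range fun i => s(f (i, true), f (i, false)) := by
      simp [Subgraph.edgeSet_iSup, Set.range]
    rw [hedges, ← Set.image_univ, Set.ncard_image_of_injective _ ?_, Set.ncard_univ]
    intro i j hij
    rcases Sym2.eq_iff.mp hij with ⟨h, -⟩ | ⟨h, -⟩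
    · exact (hne h).1
    · exact absurd (hne h).2 Bool.noConfusion
  · ext x
    simp only [Subgraph.verts_iSup, subgraphOfAdj_verts, Set.mem_iUnion, Set.mem_insert_iff,
      Set.mem_singleton_iff, Set.mem_range, Prod.exists, Bool.exists_bool]
    constructor
    · rintro ⟨i, rfl | rfl⟩
      exacts [⟨i, .inr rfl⟩, ⟨i, .inl rfl⟩]
    · rintro ⟨i, rfl | rfl⟩
      exacts [⟨i, .inr rfl⟩, ⟨i, .inl rfl⟩]

theorem Subgraph.IsMatching.mem_verts_of_adj_of_le {M P : G.Subgraph} (hM : M.IsMatching)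
    (hP : P.IsMatching) (hMP : M ≤ P) {u v : V} (huv : P.Adj u v) (hu : u ∈ M.verts) :
    v ∈ M.verts := by
  obtain ⟨w, huw, -⟩ := hM hu
  obtain rfl := hP.eq_of_adj_left huv (hMP.2 huw)
  exact M.edge_vert huw.symm

section Extendable

variable [Fintype V]

theorem IsKExtendable.exists_adj_notMem_verts {k : ℕ} (hG : G.IsKExtendable k)
    {M : G.Subgraph} (hM : M.IsMatching) (hcard : M.edgeSet.ncard = k) {v : V}
    (hv : v ∉ M.verts) : ∃ u, G.Adj v u ∧ u ∉ M.verts := by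
  obtain ⟨P, hP, hMP⟩ := hG.2 M hM hcard
  obtain ⟨u, hvu, -⟩ := hP.1 (hP.2 v)
  exact ⟨u, P.adj_sub hvu, fun hu => hv (hM.mem_verts_of_adj_of_le hP.1 hMP hvu.symm hu)⟩

theorem IsKExtendable.exists_adj_notMem_range {k : ℕ} (hG : G.IsKExtendable k)
    {f : Fin k × Bool → V} (hf : Injective f)
    (hadj : ∀ i, G.Adj (f (i, true)) (f (i, false))) {v : V} (hv : v ∉ Set.range f) :
    ∃ u, G.Adj v u ∧ u ∉ Set.range f := by
  obtain ⟨M, hM, hcard, hverts⟩ := exists_isMatching_verts_eq_range hf hadj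
  rw [← hverts] at hv ⊢
  exact hG.exists_adj_notMem_verts hM (hcard.trans (Nat.card_fin k)) hv

end Extendable

theorem IsKExtendable.exists_adj_notMem_range_of_induce {W : Set V} [Fintype W] {k : ℕ}
    (hG : (G.induce W).IsKExtendable k) {f : Fin k × Bool → V}
    (hf : Injective f) (hfW : ∀ p, f p ∈ W) (hadj : ∀ i, G.Adj (f (i, true)) (f (i, false)))
    {v : V} (hvW : v ∈ W) (hv : v ∉ Set.range f) : ∃ u ∈ W, G.Adj v u ∧ u ∉ Set.range f := by
  obtain ⟨u, hvu, hu⟩ := hG.exists_adj_notMem_range (f := Set.codRestrict f W hfW)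
    (hf.codRestrict hfW) hadj (v := ⟨v, hvW⟩) fun ⟨p, hp⟩ => hv ⟨p, congrArg Subtype.val hp⟩
  exact ⟨u, u.2, hvu, fun ⟨p, hp⟩ => hu ⟨p, Subtype.ext hp⟩⟩

theorem exists_card_eq_disjoint_of_degree_le [Fintype V] [DecidableEq V] [DecidableRel G.Adj]
    {v : V} {A : Finset V} {n : ℕ} (hA : A ⊆ G.neighborFinset v)
    (hdeg : G.degree v ≤ n + #A) (hV : n + #A + 1 ≤ Fintype.card V) :
    ∃ S : Finset V, G.neighborFinset v \ A ⊆ S ∧ Disjoint S (insert v A) ∧ #S = n := by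
  have hvA : v ∉ A := fun hv => G.irrefl ((G.mem_neighborFinset v v).1 (hA hv))
  simp_rw [← subset_compl_iff_disjoint_right]
  refine exists_subsuperset_card_eq (fun x hx => ?_) ?_ ?_
  · obtain ⟨hvx, hxA⟩ := mem_sdiff.1 hx
    simp only [mem_compl, mem_insert, not_or]
    exact ⟨((G.mem_neighborFinset v x).1 hvx).ne', hxA⟩
  · rw [card_sdiff_of_subset hA, card_neighborFinset_eq_degree]
    omega
  · rw [card_compl, card_insert_of_notMem hvA]
    omega

end SimpleGraph

theorem nkGraph_degree_of_matching_in_nbhd_general {V : Type*} [Fintype V] [DecidableEq V]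
    (G : SimpleGraph V) [DecidableRel G.Adj] (n k : ℕ)
    (h : G.IsNKGraph n k) (v : V)
    (e : Fin k → V × V)
    (hadj : ∀ i, G.Adj (e i).1 (e i).2 ∧ G.Adj v (e i).1 ∧ G.Adj v (e i).2)
    (hinj : Function.Injective
      (fun p : Fin k × Bool => if p.2 then (e p.1).1 else (e p.1).2)) :
    n + 2 * k + 1 ≤ G.degree v := by
  by_contra! hdeg
  set f : Fin k × Bool → V := fun p => if p.2 then (e p.1).1 else (e p.1).2
  set A : Finset V := univ.image f
  have hA : #A = 2 * k := by simp [A, card_image_of_injective _ hinj, mul_comm]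
  have hAN : A ⊆ G.neighborFinset v := by
    simp only [A, image_subset_iff, mem_univ, SimpleGraph.mem_neighborFinset, forall_const, Prod.forall,
      Bool.forall_bool]
    exact fun i => ⟨(hadj i).2.2, (hadj i).2.1⟩
  have hvf : v ∉ Set.range f := by
    rintro ⟨p, rfl⟩
    exact G.irrefl ((G.mem_neighborFinset _ _).1 (hAN (mem_image_of_mem f (mem_univ p))))
  obtain ⟨S, hNS, hSA, hS⟩ :=
    SimpleGraph.exists_card_eq_disjoint_of_degree_le (n := n) hAN (by omega) (by have := h.1; omega)
  have hkeep : ∀ x ∈ insert v A, x ∈ ((Sᶜ : Finset V) : Set V) := fun x hx => by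
    simpa using disjoint_right.1 hSA hx
  obtain ⟨u, huS, hvu, huA⟩ := (h.2.2 S hS).exists_adj_notMem_range_of_induce
    hinj (fun p => hkeep _ (mem_insert_of_mem (mem_image_of_mem f (mem_univ p))))
    (fun i => (hadj i).1) (hkeep v (mem_insert_self v A)) hvf
  have huN : u ∈ G.neighborFinset v \ A :=
    mem_sdiff.2 ⟨(G.mem_neighborFinset v u).2 hvu, by simpa [A] using huA⟩
  exact (by simpa using huS : u ∉ S) (hNS huN)

/-- If `v` is a vertex of a connected `(n,k)`-graph (with `k ≥ 1`) whose neighborhood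
contains `k` pairwise disjoint edges, then `d(v) ≥ n + 2k + 1`.  The `k`-matching in
`N(v)` is encoded by functions `e : Fin k → V × V` giving the endpoints of the `k`
edges, with all `2k` endpoints distinct, adjacent to `v`, and joined in pairs. -/
theorem nkGraph_degree_of_matching_in_nbhd {V : Type*} [Fintype V] [DecidableEq V]
    (G : SimpleGraph V) [DecidableRel G.Adj] (n k : ℕ) (hk : 1 ≤ k)
    (hconn : G.Connected) (h : G.IsNKGraph n k) (v : V)
    (e : Fin k → V × V)
    (hadj : ∀ i, G.Adj (e i).1 (e i).2 ∧ G.Adj v (e i).1 ∧ G.Adj v (e i).2)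
    (hinj : Function.Injective
      (fun p : Fin k × Bool => if p.2 then (e p.1).1 else (e p.1).2)) :
    n + 2 * k + 1 ≤ G.degree v :=
  nkGraph_degree_of_matching_in_nbhd_general G n k h v e hadj hinj
end

section
/- If G is an (n,k)-graph with n ≥ 2, then G is an (n-2, k+1)-graph. -/
/-!
Fix `n - 2` deleted vertices `S` and an edge `ab` of `G - S`. Deleting `a` and `b` as well leaves
`n` deleted vertices, so `G - S - {a, b}` is `k`-extendable; adding the edge `ab` to its perfect
matchings gives perfect matchings of `G - S`. A `(k + 1)`-matching of `G - S` through `ab`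
has no other edge meeting `a` or `b`, so it restricts to a `k`-matching of `G - S - {a, b}`,
whose extension plus `ab` extends it.
-/

namespace SimpleGraph

variable {V W W' : Type*} {H : SimpleGraph W} {H' : SimpleGraph W'} {f : H' ↪g H} {a b : W}

namespace Subgraph

lemma IsMatching.notMem_pair_of_adj {G : SimpleGraph V} {M : G.Subgraph} {a b x y : V}
    (hM : M.IsMatching) (hab : M.Adj a b) (hxy : M.Adj x y) (hx : x ∉ ({a, b} : Set V)) :
    y ∉ ({a, b} : Set V) := by
  rintro (rfl | rfl)
  · exact hx (Or.inr (hM.eq_of_adj_left hab hxy.symm).symm)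
  · exact hx (Or.inl (hM.eq_of_adj_right hab hxy).symm)

lemma IsPerfectMatching.map_sup_subgraphOfAdj {P : H'.Subgraph} (hP : P.IsPerfectMatching)
    (hf : Set.range f = {a, b}ᶜ) (hab : H.Adj a b) :
    (P.map f.toHom ⊔ H.subgraphOfAdj hab).IsPerfectMatching := by
  have hPf := hP.1.map f.toHom f.injective
  refine ⟨hPf.sup (.subgraphOfAdj hab) ?_, fun w => ?_⟩
  · rw [hPf.support_eq_verts, (IsMatching.subgraphOfAdj hab).support_eq_verts, map_verts,
      subgraphOfAdj_verts]
    exact disjoint_compl_left.mono_left (hf ▸ Set.image_subset_range _ _)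
  · by_cases hw : w ∈ ({a, b} : Set W)
    · exact Or.inr hw
    · obtain ⟨x, rfl⟩ : w ∈ Set.range f := hf ▸ hw
      exact Or.inl ⟨x, hP.2 x, rfl⟩

variable {M : H.Subgraph}

lemma IsMatching.comap_of_range_eq_compl_pair (hM : M.IsMatching) (hab : M.Adj a b)
    (hf : Set.range f = {a, b}ᶜ) : (M.comap f.toHom).IsMatching := by
  intro x hx
  obtain ⟨y, hxy, huniq⟩ := hM hx
  have hfx : f x ∈ ({a, b} : Set W)ᶜ := hf ▸ Set.mem_range_self x
  obtain ⟨y', rfl⟩ : y ∈ Set.range f := hf ▸ hM.notMem_pair_of_adj hab hxy hfx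
  exact ⟨y', ⟨f.map_adj_iff.mp (M.adj_sub hxy), hxy⟩, fun z hz => f.injective (huniq _ hz.2)⟩

lemma map_comap_sup_subgraphOfAdj (hM : M.IsMatching) (hab : M.Adj a b)
    (hf : Set.range f = {a, b}ᶜ) :
    (M.comap f.toHom).map f.toHom ⊔ H.subgraphOfAdj (M.adj_sub hab) = M := by
  have hrange {w : W} (hw : w ∉ ({a, b} : Set W)) : w ∈ Set.range f := hf ▸ hw
  ext w
  · refine ⟨?_, fun hw => ?_⟩
    · rintro (⟨x, hx, rfl⟩ | rfl | rfl)
      exacts [hx, M.edge_vert hab, M.edge_vert hab.symm]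
    · by_cases hab' : w ∈ ({a, b} : Set W)
      · exact Or.inr hab'
      · obtain ⟨x, rfl⟩ := hrange hab'
        exact Or.inl ⟨x, hw, rfl⟩
  · rename_i w'
    simp only [sup_adj, map_adj, subgraphOfAdj_adj]
    refine ⟨?_, fun hww' => ?_⟩
    · rintro (⟨x, x', ⟨-, hxx'⟩, rfl, rfl⟩ | hab')
      · exact hxx'
      · rcases Sym2.eq_iff.mp hab' with ⟨rfl, rfl⟩ | ⟨rfl, rfl⟩
        exacts [hab, hab.symm]
    · by_cases hw : w ∈ ({a, b} : Set W)
      · right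
        rcases hw with rfl | rfl
        · rw [hM.eq_of_adj_left hab hww']
        · rw [hM.eq_of_adj_left hab.symm hww', Sym2.eq_swap]
      · obtain ⟨x, rfl⟩ := hrange hw
        obtain ⟨x', rfl⟩ := hrange (hM.notMem_pair_of_adj hab hww' hw)
        exact Or.inl ⟨x, x', ⟨f.map_adj_iff.mp (M.adj_sub hww'), hww'⟩, rfl, rfl⟩

lemma ncard_edgeSet_comap_add_one [Finite W] (hM : M.IsMatching) (hab : M.Adj a b)
    (hf : Set.range f = {a, b}ᶜ) :
    (M.comap f.toHom).edgeSet.ncard + 1 = M.edgeSet.ncard := by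
  conv_rhs => rw [← map_comap_sup_subgraphOfAdj hM hab hf]
  have hab' : s(a, b) ∉ Sym2.map f.toHom '' (M.comap f.toHom).edgeSet := by
    rintro ⟨e, -, he⟩
    obtain ⟨x, -, hx⟩ := Sym2.mem_map.mp (he ▸ Sym2.mem_mk_left a b)
    exact (hf ▸ Set.mem_range_self x : f x ∈ ({a, b} : Set W)ᶜ) (hx ▸ Or.inl rfl)
  rw [edgeSet_sup, edgeSet_map, edgeSet_subgraphOfAdj,
    Set.ncard_union_eq (Set.disjoint_singleton_right.mpr hab'), Set.ncard_singleton,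
    Set.ncard_image_of_injective _ (Sym2.map.injective (f := f.toHom) f.injective)]

end Subgraph

open Subgraph

theorem IsKExtendable.exists_isPerfectMatching_le_of_embedding [Fintype W'] [Finite W] {k : ℕ}
    (hH' : H'.IsKExtendable k) (hf : Set.range f = {a, b}ᶜ) {M : H.Subgraph}
    (hM : M.IsMatching) (hab : M.Adj a b) (hcard : M.edgeSet.ncard = k + 1) :
    ∃ P : H.Subgraph, P.IsPerfectMatching ∧ M ≤ P := by
  obtain ⟨P', hP', hle⟩ := hH'.2 _ (hM.comap_of_range_eq_compl_pair hab hf)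
    (by have := ncard_edgeSet_comap_add_one hM hab hf; omega)
  refine ⟨_, hP'.map_sup_subgraphOfAdj hf (M.adj_sub hab), ?_⟩
  calc M = (M.comap f.toHom).map f.toHom ⊔ H.subgraphOfAdj (M.adj_sub hab) :=
        (map_comap_sup_subgraphOfAdj hM hab hf).symm
    _ ≤ P'.map f.toHom ⊔ H.subgraphOfAdj (M.adj_sub hab) := sup_le_sup_right (map_mono hle) _

section Induce

variable [Fintype V] [DecidableEq V] {G : SimpleGraph V}

lemma exists_induce_embedding_range_eq_compl_pair (S : Finset V)
    (a b : ((Sᶜ : Finset V) : Set V)) :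
    ∃ f : G.induce (((insert a.1 (insert b.1 S))ᶜ : Finset V) : Set V) ↪g
      G.induce ((Sᶜ : Finset V) : Set V), Set.range f = {a, b}ᶜ := by
  have hsub : (((insert a.1 (insert b.1 S))ᶜ : Finset V) : Set V) ⊆ ((Sᶜ : Finset V) : Set V) :=
    Finset.coe_subset.mpr (Finset.compl_subset_compl.mpr
      ((Finset.subset_insert _ _).trans (Finset.subset_insert _ _)))
  refine ⟨G.induceHomOfLE hsub, ?_⟩
  change Set.range (Set.inclusion hsub) = _
  rw [Set.range_inclusion]
  ext x
  have hx := x.2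
  simp only [Finset.coe_compl, Set.mem_compl_iff, Finset.mem_coe] at hx
  simp only [Finset.coe_compl, Finset.coe_insert, Set.mem_ofPred_eq, Set.mem_compl_iff,
    Set.mem_insert_iff, Finset.mem_coe, not_or, ← Subtype.ext_iff]
  tauto

lemma IsNKGraph.exists_adj_induce_compl {n k : ℕ} (h : G.IsNKGraph n k) {S : Finset V}
    (hS : S.card ≤ n) : ∃ a b, (G.induce ((Sᶜ : Finset V) : Set V)).Adj a b := by
  obtain ⟨T, hST, hT⟩ := Finset.exists_superset_card_eq hS (by have := h.1; omega)
  obtain ⟨P, hP⟩ := (h.2.2 T hT).1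
  obtain ⟨x, hx⟩ : (Tᶜ).Nonempty :=
    Finset.card_pos.mp (by rw [Finset.card_compl, hT]; have := h.1; omega)
  obtain ⟨y, hxy, -⟩ := hP.1 (hP.2 ⟨x, by simpa using hx⟩)
  exact ⟨_, _, (G.induceHomOfLE (Finset.coe_subset.mpr
    (Finset.compl_subset_compl.mpr hST))).map_adj_iff.mpr (P.adj_sub hxy)⟩

end Induce

end SimpleGraph

open SimpleGraph

theorem nkGraph_step {V : Type*} [Fintype V] [DecidableEq V]
    (G : SimpleGraph V) (n k : ℕ) (hn : 2 ≤ n) (h : G.IsNKGraph n k) :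
    G.IsNKGraph (n - 2) (k + 1) := by
  refine ⟨by have := h.1; omega, by have := h.2.1; omega, fun S hS => ?_⟩
  have hdel (a b : ((Sᶜ : Finset V) : Set V)) (hab : a ≠ b) :
      (G.induce (((insert a.1 (insert b.1 S))ᶜ : Finset V) : Set V)).IsKExtendable k := by
    refine h.2.2 _ ?_
    have ha : a.1 ∉ insert b.1 S := by
      rw [Finset.mem_insert, not_or]
      exact ⟨fun hba => hab (Subtype.ext hba), by simpa using a.2⟩
    rw [Finset.card_insert_of_notMem ha, Finset.card_insert_of_notMem (by simpa using b.2)]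
    omega
  refine ⟨?_, fun M hM hMcard => ?_⟩
  · obtain ⟨a, b, hab⟩ := h.exists_adj_induce_compl (S := S) (by omega)
    obtain ⟨f, hf⟩ := exists_induce_embedding_range_eq_compl_pair S a b
    obtain ⟨P, hP⟩ := (hdel a b hab.ne).1
    exact ⟨_, hP.map_sup_subgraphOfAdj hf hab⟩
  · obtain ⟨e, he⟩ := Set.nonempty_of_ncard_ne_zero (s := M.edgeSet) (by omega)
    induction e with | _ a b => ?_
    obtain ⟨f, hf⟩ := exists_induce_embedding_range_eq_compl_pair S a b
    exact (hdel a b (M.adj_sub he).ne).exists_isPerfectMatching_le_of_embedding hf hM he hMcard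
end

section
/- If G is a connected (n,k)-graph with k ≥ 1, then the minimum degree of G is at least n + k + 1. -/
/-!
Let `v` be a vertex of minimum degree `δ` and suppose `δ ≤ n + k`. If `δ ≤ n`, deleting `n`
vertices including all neighbours of `v` isolates `v`. Otherwise delete a set `S` of `n`
neighbours of `v`; in the `k`-extendable graph `G - S` the vertex `v` keeps `t = δ - n ≤ k`
neighbours.

In a `k`-extendable graph on at least `2k + 2` vertices, a vertex `x` of degree at most `k` has
at most `2 deg x` vertices in its component. Indeed, if `F` is a perfect matching of `Γ - x - y`
then `y` is a neighbour of `x`: otherwise the edges of `F` at the neighbours of `x`, completed to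
`k` edges of `F`, form a matching that no perfect matching can extend, as it would have to match
`x` to an already matched vertex. Flipping `F` along short alternating paths produces further
such pairs, which shows that `x`, its neighbours and their partners under `F` form a union of
components.

So the component `C` of `v` in `G - S` has at most `2t` vertices, each with at least `t`
neighbours in it, and hence every vertex of `C` stays within distance two of `v` after the
removal of any single neighbour `a` of `v`. Choosing `S` to maximise `|C|`, exchanging a vertex
`s ∈ S` for `a` shows that all neighbours of `s` lie in `C ∪ S`. By connectivity `V = C ∪ S`,
so `|V| ≤ 2t + n ≤ n + 2k`, contradicting `|V| ≥ n + 2k + 2`.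
-/

open Finset SimpleGraph

namespace SimpleGraph

section EdgeMatching

variable {W : Type*} {Γ : SimpleGraph W}

def IsEdgeMatching (Γ : SimpleGraph W) (F : Finset (Sym2 W)) : Prop :=
  (∀ e ∈ F, e ∈ Γ.edgeSet) ∧ ∀ e ∈ F, ∀ f ∈ F, e ≠ f → ∀ x ∈ e, x ∉ f

theorem IsEdgeMatching.mono {F F' : Finset (Sym2 W)} (h : Γ.IsEdgeMatching F')
    (hsub : F ⊆ F') : Γ.IsEdgeMatching F :=
  ⟨fun e he => h.1 e (hsub he), fun e he f hf => h.2 e (hsub he) f (hsub hf)⟩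

theorem IsEdgeMatching.eq_of_mem {F : Finset (Sym2 W)} {e f : Sym2 W} {x : W}
    (h : Γ.IsEdgeMatching F) (he : e ∈ F) (hf : f ∈ F) (hxe : x ∈ e) (hxf : x ∈ f) :
    e = f := by
  by_contra hne
  exact h.2 e he f hf hne x hxe hxf

theorem Subgraph.IsMatching.isEdgeMatching_toFinset {M : Γ.Subgraph} [Fintype M.edgeSet]
    (hM : M.IsMatching) : Γ.IsEdgeMatching M.edgeSet.toFinset := by
  refine ⟨fun e he => M.edgeSet_subset (Set.mem_toFinset.mp he), ?_⟩
  intro e he f hf hne x hxe hxf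
  obtain ⟨y, rfl⟩ := Sym2.mem_iff_exists.mp hxe
  obtain ⟨y', rfl⟩ := Sym2.mem_iff_exists.mp hxf
  rw [Set.mem_toFinset, Subgraph.mem_edgeSet] at he hf
  exact hne (by rw [hM.eq_of_adj_left he hf])

variable [DecidableEq W]

def matchedVerts (F : Finset (Sym2 W)) : Finset W :=
  F.biUnion Sym2.toFinset

/-- `x` itself if `x` is unmatched by `F`. -/
noncomputable def mate (F : Finset (Sym2 W)) (x : W) : W :=
  if h : ∃ e ∈ F, x ∈ e then Sym2.Mem.other' h.choose_spec.2 else x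

def incident (F : Finset (Sym2 W)) (X : Finset W) : Finset (Sym2 W) :=
  F.filter fun e => ∃ u ∈ X, u ∈ e

variable {F F' : Finset (Sym2 W)} {X : Finset W} {e f : Sym2 W} {x y : W}

theorem mem_matchedVerts : x ∈ matchedVerts F ↔ ∃ e ∈ F, x ∈ e := by
  simp [matchedVerts]

theorem matchedVerts_mono (h : F ⊆ F') : matchedVerts F ⊆ matchedVerts F' :=
  biUnion_subset_biUnion_of_subset_left _ h

theorem mem_matchedVerts_insert :
    x ∈ matchedVerts (insert e F) ↔ x ∈ e ∨ x ∈ matchedVerts F := by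
  simp [matchedVerts]

theorem mem_incident : e ∈ incident F X ↔ e ∈ F ∧ ∃ u ∈ X, u ∈ e := mem_filter

theorem incident_subset : incident F X ⊆ F := filter_subset _ _

theorem mk_mate_mem (h : x ∈ matchedVerts F) : s(x, mate F x) ∈ F := by
  rw [mem_matchedVerts] at h
  rw [mate, dif_pos h, Sym2.other_spec' h.choose_spec.2]
  exact h.choose_spec.1

theorem mate_mem_matchedVerts (h : x ∈ matchedVerts F) : mate F x ∈ matchedVerts F :=
  mem_matchedVerts.mpr ⟨_, mk_mate_mem h, Sym2.mem_mk_right _ _⟩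

namespace IsEdgeMatching

theorem mate_eq (h : Γ.IsEdgeMatching F) (hxy : s(x, y) ∈ F) : mate F x = y := by
  have hx : x ∈ matchedVerts F := mem_matchedVerts.mpr ⟨_, hxy, Sym2.mem_mk_left _ _⟩
  rcases Sym2.eq_iff.mp (h.eq_of_mem (mk_mate_mem hx) hxy (Sym2.mem_mk_left _ _)
    (Sym2.mem_mk_left _ _)) with ⟨-, h⟩ | ⟨h1, h2⟩
  · exact h
  · rw [h2, h1]

theorem eq_mk_mate (h : Γ.IsEdgeMatching F) (he : e ∈ F) (hx : x ∈ e) : e = s(x, mate F x) :=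
  h.eq_of_mem he (mk_mate_mem (mem_matchedVerts.mpr ⟨e, he, hx⟩)) hx (Sym2.mem_mk_left _ _)

theorem adj_mate (h : Γ.IsEdgeMatching F) (hx : x ∈ matchedVerts F) : Γ.Adj x (mate F x) :=
  h.1 _ (mk_mate_mem hx)

theorem mate_ne (h : Γ.IsEdgeMatching F) (hx : x ∈ matchedVerts F) : mate F x ≠ x :=
  (h.adj_mate hx).ne'

theorem mate_mate (h : Γ.IsEdgeMatching F) (hx : x ∈ matchedVerts F) :
    mate F (mate F x) = x :=
  h.mate_eq (Sym2.eq_swap ▸ mk_mate_mem hx)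

theorem mate_injOn (h : Γ.IsEdgeMatching F) : Set.InjOn (mate F) (matchedVerts F) :=
  fun x hx y hy hxy => by rw [← h.mate_mate hx, hxy, h.mate_mate hy]

theorem mem_matchedVerts_erase {u : W} (h : Γ.IsEdgeMatching F) (he : e ∈ F) :
    u ∈ matchedVerts (F.erase e) ↔ u ∈ matchedVerts F ∧ u ∉ e := by
  simp only [mem_matchedVerts, mem_erase]
  refine ⟨fun ⟨f, ⟨hfe, hf⟩, huf⟩ =>
    ⟨⟨f, hf, huf⟩, fun hue => hfe (h.eq_of_mem hf he huf hue)⟩,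
    fun ⟨⟨f, hf, huf⟩, hue⟩ => ⟨f, ⟨fun hfe => hue (hfe ▸ huf), hf⟩, huf⟩⟩

theorem insert (h : Γ.IsEdgeMatching F) (hxy : Γ.Adj x y) (hx : x ∉ matchedVerts F)
    (hy : y ∉ matchedVerts F) : Γ.IsEdgeMatching (insert s(x, y) F) := by
  have hfree : ∀ f ∈ F, ∀ u ∈ s(x, y), u ∉ f := by
    intro f hf u hu huf
    rcases Sym2.mem_iff.mp hu with rfl | rfl
    exacts [hx (mem_matchedVerts.mpr ⟨f, hf, huf⟩), hy (mem_matchedVerts.mpr ⟨f, hf, huf⟩)]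
  refine ⟨fun e he => ?_, fun e he f hf hne u hue huf => ?_⟩
  · rcases mem_insert.mp he with rfl | he
    exacts [hxy, h.1 e he]
  rcases mem_insert.mp he with rfl | he <;> rcases mem_insert.mp hf with rfl | hf
  · exact hne rfl
  · exact hfree f hf u hue huf
  · exact hfree e he u huf hue
  · exact h.2 e he f hf hne u hue huf

theorem card_matchedVerts (h : Γ.IsEdgeMatching F) : #(matchedVerts F) = 2 * #F := by
  rw [matchedVerts, card_biUnion, sum_const_nat, mul_comm]
  · exact fun e he =>
      Sym2.card_toFinset_of_not_isDiag e (Γ.not_isDiag_of_mem_edgeSet (h.1 e he))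
  · intro e he f hf hne
    exact Finset.disjoint_left.mpr fun u hue huf =>
      h.2 e he f hf hne u (Sym2.mem_toFinset.mp hue) (Sym2.mem_toFinset.mp huf)

theorem card_incident_le (h : Γ.IsEdgeMatching F) : #(incident F X) ≤ #X := by
  refine (card_le_card fun e he => ?_).trans (card_image_le (f := fun u => s(u, mate F u)))
  obtain ⟨heF, u, hu, hue⟩ := mem_incident.mp he
  exact mem_image.mpr ⟨u, hu, (h.eq_mk_mate heF hue).symm⟩

def toSubgraph (h : Γ.IsEdgeMatching F) : Γ.Subgraph where
  verts := matchedVerts F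
  Adj a b := s(a, b) ∈ F
  adj_sub hab := h.1 _ hab
  edge_vert hab := mem_matchedVerts.mpr ⟨_, hab, Sym2.mem_mk_left _ _⟩
  symm := ⟨fun a b (hab : s(a, b) ∈ F) => show s(b, a) ∈ F from Sym2.eq_swap ▸ hab⟩

theorem toSubgraph_isMatching (h : Γ.IsEdgeMatching F) : h.toSubgraph.IsMatching :=
  fun _ hv => ⟨_, mk_mate_mem hv, fun _ (hy : s(_, _) ∈ F) => (h.mate_eq hy).symm⟩

theorem edgeSet_toSubgraph (h : Γ.IsEdgeMatching F) : h.toSubgraph.edgeSet = F := by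
  ext e
  induction e with
  | _ a b => rw [Subgraph.mem_edgeSet]; exact Iff.rfl

end IsEdgeMatching

end EdgeMatching

section NearPerfectMatching

variable {W : Type*} [Fintype W] [DecidableEq W] {Γ : SimpleGraph W} {F : Finset (Sym2 W)}
  {k : ℕ} {x y z b c u v w : W}

namespace IsKExtendable

theorem exists_isEdgeMatching_matchedVerts_eq_univ (hext : Γ.IsKExtendable k) :
    ∃ F : Finset (Sym2 W), Γ.IsEdgeMatching F ∧ matchedVerts F = univ := by
  classical
  obtain ⟨M, hM⟩ := hext.1
  refine ⟨M.edgeSet.toFinset, hM.1.isEdgeMatching_toFinset, eq_univ_of_forall fun x => ?_⟩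
  obtain ⟨w, hw, -⟩ := hM.1 (hM.2 x)
  exact mem_matchedVerts.mpr ⟨s(x, w), Set.mem_toFinset.mpr hw, Sym2.mem_mk_left _ _⟩

/-- A perfect matching extending `F` must match `z` to a neighbour left unmatched by `F`. -/
theorem exists_adj_notMem_of_card_eq (hext : Γ.IsKExtendable k) (hF : Γ.IsEdgeMatching F)
    (hcard : #F = k) (hz : z ∉ matchedVerts F) : ∃ w, Γ.Adj z w ∧ w ∉ matchedVerts F := by
  obtain ⟨P, hP, hle⟩ := hext.2 hF.toSubgraph hF.toSubgraph_isMatching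
    (by rw [hF.edgeSet_toSubgraph, Set.ncard_coe_finset, hcard])
  obtain ⟨w, hzw, -⟩ := hP.1 (hP.2 z)
  refine ⟨w, P.adj_sub hzw, fun hw => hz ?_⟩
  rw [hP.1.eq_of_adj_left hzw.symm (hle.2 (mk_mate_mem hw))]
  exact mate_mem_matchedVerts hw

end IsKExtendable

/-- `F` is a perfect matching of `Γ - x - y`. -/
structure IsNearPerfectMatching (Γ : SimpleGraph W) (x y : W) (F : Finset (Sym2 W)) : Prop where
  ne : x ≠ y
  isEdgeMatching : Γ.IsEdgeMatching F
  matchedVerts_eq : matchedVerts F = univ \ {x, y}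

open scoped Classical in
noncomputable def nearPartners (Γ : SimpleGraph W) (x : W) : Finset W :=
  univ.filter fun y => ∃ F, Γ.IsNearPerfectMatching x y F

theorem mem_nearPartners : y ∈ Γ.nearPartners x ↔ ∃ F, Γ.IsNearPerfectMatching x y F := by
  simp [nearPartners]

namespace IsNearPerfectMatching

theorem symm (h : Γ.IsNearPerfectMatching x y F) : Γ.IsNearPerfectMatching y x F :=
  ⟨h.ne.symm, h.isEdgeMatching, h.matchedVerts_eq.trans (by rw [pair_comm])⟩

theorem mem_matchedVerts (h : Γ.IsNearPerfectMatching x y F) :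
    u ∈ matchedVerts F ↔ u ≠ x ∧ u ≠ y := by
  simp [h.matchedVerts_eq]

theorem left_notMem (h : Γ.IsNearPerfectMatching x y F) : x ∉ matchedVerts F :=
  fun hx => (h.mem_matchedVerts.mp hx).1 rfl

theorem right_notMem (h : Γ.IsNearPerfectMatching x y F) : y ∉ matchedVerts F :=
  fun hy => (h.mem_matchedVerts.mp hy).2 rfl

theorem mate_ne_left (h : Γ.IsNearPerfectMatching x y F) (hu : u ∈ matchedVerts F) :
    mate F u ≠ x :=
  (h.mem_matchedVerts.mp (mate_mem_matchedVerts hu)).1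

theorem mate_ne_right (h : Γ.IsNearPerfectMatching x y F) (hu : u ∈ matchedVerts F) :
    mate F u ≠ y :=
  (h.mem_matchedVerts.mp (mate_mem_matchedVerts hu)).2

theorem le_card (h : Γ.IsNearPerfectMatching x y F) (hcard : 2 * k + 2 ≤ Fintype.card W) :
    k ≤ #F := by
  have hverts := h.isEdgeMatching.card_matchedVerts
  rw [h.matchedVerts_eq, card_sdiff_of_subset (subset_univ _), card_univ, card_pair h.ne]
    at hverts
  omega

theorem flip (h : Γ.IsNearPerfectMatching x y F) (hyw : Γ.Adj y w) (hwx : w ≠ x) :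
    Γ.IsNearPerfectMatching x (mate F w) (insert s(y, w) (F.erase s(w, mate F w))) := by
  have hM := h.isEdgeMatching
  have hw : w ∈ matchedVerts F := h.mem_matchedVerts.mpr ⟨hwx, hyw.ne'⟩
  have hmate := mk_mate_mem hw
  have hzy : mate F w ≠ y := h.mate_ne_right hw
  have hzw : mate F w ≠ w := hM.mate_ne hw
  have hxy : x ≠ y := h.ne
  refine ⟨(h.mate_ne_left hw).symm, (hM.mono (erase_subset _ _)).insert hyw ?_ ?_, ?_⟩
  · rw [hM.mem_matchedVerts_erase hmate]
    exact fun hy => h.right_notMem hy.1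
  · rw [hM.mem_matchedVerts_erase hmate]
    exact fun hw => hw.2 (Sym2.mem_mk_left _ _)
  · ext u
    rw [mem_matchedVerts_insert, hM.mem_matchedVerts_erase hmate, h.mem_matchedVerts]
    simp only [Sym2.mem_iff, mem_sdiff, mem_univ, mem_insert, mem_singleton, true_and]
    grind

theorem mate_mem_nearPartners (h : Γ.IsNearPerfectMatching x y F) (hyw : Γ.Adj y w)
    (hwx : w ≠ x) : mate F w ∈ Γ.nearPartners x :=
  mem_nearPartners.mpr ⟨_, h.flip hyw hwx⟩

theorem mate_flip (h : Γ.IsNearPerfectMatching x y F) (hyw : Γ.Adj y w) (hwx : w ≠ x)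
    (hc : c ∈ matchedVerts F) (hcw : c ∉ s(w, mate F w)) :
    mate (insert s(y, w) (F.erase s(w, mate F w))) c = mate F c :=
  (h.flip hyw hwx).isEdgeMatching.mate_eq (mem_insert_of_mem (mem_erase.mpr
    ⟨fun he => hcw (he ▸ Sym2.mem_mk_left _ _), mk_mate_mem hc⟩))

/-- Flip along the alternating path `y, b, mate F b, v, mate F v`. -/
theorem mate_mem_nearPartners_of_adj_mate (h : Γ.IsNearPerfectMatching x y F) (hyb : Γ.Adj y b)
    (hbx : b ≠ x) (hv : Γ.Adj (mate F b) v) (hvx : v ≠ x) (hvy : v ≠ y) (hvb : v ≠ b) :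
    mate F v ∈ Γ.nearPartners x := by
  have hvF : v ∈ matchedVerts F := h.mem_matchedVerts.mpr ⟨hvx, hvy⟩
  rw [← h.mate_flip hyb hbx hvF (by simp [Sym2.mem_iff, hvb, hv.ne'])]
  exact (h.flip hyb hbx).mate_mem_nearPartners hv hvx

theorem card_neighborFinset_erase_lt [DecidableRel Γ.Adj] (h : Γ.IsNearPerfectMatching x y F) :
    #((Γ.neighborFinset y).erase x) < #(Γ.nearPartners x) := by
  have hmatched : ∀ w ∈ (Γ.neighborFinset y).erase x, w ∈ matchedVerts F := fun w hw => by
    obtain ⟨hwx, hyw⟩ := mem_erase.mp hw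
    exact h.mem_matchedVerts.mpr ⟨hwx, ((mem_neighborFinset _ _ _).mp hyw).ne'⟩
  calc #((Γ.neighborFinset y).erase x)
      ≤ #((Γ.nearPartners x).erase y) := by
        refine card_le_card_of_injOn (mate F) (fun w hw => ?_)
          (h.isEdgeMatching.mate_injOn.mono fun w hw => hmatched w hw)
        obtain ⟨hwx, hyw⟩ := mem_erase.mp hw
        exact mem_erase.mpr ⟨h.mate_ne_right (hmatched w hw),
          h.mate_mem_nearPartners ((mem_neighborFinset _ _ _).mp hyw) hwx⟩
    _ < #(Γ.nearPartners x) := card_erase_lt_of_mem (mem_nearPartners.mpr ⟨F, h⟩)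

end IsNearPerfectMatching

end NearPerfectMatching

theorem Reachable.mem_of_forall_adj_mem {W : Type*} {Γ : SimpleGraph W} {s : Set W} {u v : W}
    (h : Γ.Reachable u v) (hs : ∀ a ∈ s, ∀ b, Γ.Adj a b → b ∈ s) (hu : u ∈ s) :
    v ∈ s :=
  h.mem_subgraphVerts (H := (⊤ : Γ.Subgraph).induce s)
    (fun a ha b hab => ⟨ha, hs a ha b hab, hab⟩) hu

section LowDegree

variable {W : Type*} [Fintype W] [DecidableEq W] {Γ : SimpleGraph W} [DecidableRel Γ.Adj]
  {F : Finset (Sym2 W)} {k : ℕ} {x y a u v w : W}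

noncomputable def nbhdWithMates (Γ : SimpleGraph W) [DecidableRel Γ.Adj] (x y : W)
    (F : Finset (Sym2 W)) : Finset W :=
  insert x (Γ.neighborFinset x ∪ ((Γ.neighborFinset x).erase y).image (mate F))

theorem card_nbhdWithMates_le (hxy : Γ.Adj x y) :
    #(Γ.nbhdWithMates x y F) ≤ 2 * Γ.degree x := by
  have := card_insert_le x (Γ.neighborFinset x ∪ ((Γ.neighborFinset x).erase y).image (mate F))
  have := card_union_le (Γ.neighborFinset x) (((Γ.neighborFinset x).erase y).image (mate F))
  have := card_image_le (s := (Γ.neighborFinset x).erase y) (f := mate F)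
  have := card_erase_add_one ((mem_neighborFinset _ _ _).mpr hxy)
  rw [card_neighborFinset_eq_degree] at *
  unfold nbhdWithMates
  omega

namespace IsKExtendable

variable (hext : Γ.IsKExtendable k) (hcard : 2 * k + 2 ≤ Fintype.card W)
include hext hcard

/-- Otherwise the edges of `F` at the neighbours of `x`, completed to `k` edges of `F`, would
cover every neighbour of `x` but not `x`. -/
theorem nearPartners_subset_neighborFinset (hdeg : Γ.degree x ≤ k) :
    Γ.nearPartners x ⊆ Γ.neighborFinset x := by
  intro y hy
  obtain ⟨F, hF⟩ := mem_nearPartners.mp hy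
  have hM := hF.isEdgeMatching
  by_contra hxy
  obtain ⟨F', hEF', hF'F, hcardF'⟩ := exists_subsuperset_card_eq incident_subset
    (hM.card_incident_le.trans (card_neighborFinset_eq_degree Γ x ▸ hdeg)) (hF.le_card hcard)
  obtain ⟨w, hxw, hw⟩ := hext.exists_adj_notMem_of_card_eq (hM.mono hF'F) hcardF'
    fun hx => hF.left_notMem (matchedVerts_mono hF'F hx)
  have hwF : w ∈ matchedVerts F := hF.mem_matchedVerts.mpr ⟨hxw.ne', by
    rintro rfl
    exact hxy ((mem_neighborFinset _ _ _).mpr hxw)⟩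
  refine hw (mem_matchedVerts.mpr ⟨_, hEF' (mem_incident.mpr ⟨mk_mate_mem hwF, w, ?_,
    Sym2.mem_mk_left _ _⟩), Sym2.mem_mk_left _ _⟩)
  exact (mem_neighborFinset _ _ _).mpr hxw

variable (hdeg : Γ.degree x ≤ k)
include hdeg

theorem adj_of_isNearPerfectMatching (hF : Γ.IsNearPerfectMatching x y F) : Γ.Adj x y :=
  (mem_neighborFinset _ _ _).mp
    (hext.nearPartners_subset_neighborFinset hcard hdeg (mem_nearPartners.mpr ⟨F, hF⟩))

theorem degree_le_of_isNearPerfectMatching (hF : Γ.IsNearPerfectMatching x y F) :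
    Γ.degree y ≤ k := by
  have := hF.card_neighborFinset_erase_lt
  have := card_le_card (hext.nearPartners_subset_neighborFinset hcard hdeg)
  have := card_erase_add_one
    ((mem_neighborFinset _ _ _).mpr (hext.adj_of_isNearPerfectMatching hcard hdeg hF).symm)
  rw [card_neighborFinset_eq_degree] at *
  omega

theorem adj_mate_of_adj (hF : Γ.IsNearPerfectMatching x y F) (ha : Γ.Adj x a) (hay : a ≠ y) :
    Γ.Adj y (mate F a) :=
  (mem_neighborFinset _ _ _).mp (hext.nearPartners_subset_neighborFinset hcard
    (hext.degree_le_of_isNearPerfectMatching hcard hdeg hF) (hF.symm.mate_mem_nearPartners ha hay))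

/-- Flipping `F` along `x, a, mate F a, w` exposes `y` and `mate F w`, so these are adjacent;
flipping `F` at that edge then exposes `x` and `w`. -/
theorem adj_of_adj_mate (hF : Γ.IsNearPerfectMatching x y F) (ha : Γ.Adj x a) (hay : a ≠ y)
    (haw : Γ.Adj (mate F a) w) (hwx : w ≠ x) (hwy : w ≠ y) (hwa : w ≠ a) : Γ.Adj x w := by
  have hwF : w ∈ matchedVerts F := hF.mem_matchedVerts.mpr ⟨hwx, hwy⟩
  have hyw : Γ.Adj y (mate F w) := (mem_neighborFinset _ _ _).mp
    (hext.nearPartners_subset_neighborFinset hcard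
      (hext.degree_le_of_isNearPerfectMatching hcard hdeg hF)
      (hF.symm.mate_mem_nearPartners_of_adj_mate ha hay haw hwy hwx hwa))
  have hw := hF.mate_mem_nearPartners hyw (hF.mate_ne_left hwF)
  rw [hF.isEdgeMatching.mate_mate hwF] at hw
  exact (mem_neighborFinset _ _ _).mp (hext.nearPartners_subset_neighborFinset hcard hdeg hw)

theorem mem_nbhdWithMates_of_mate_mem (hF : Γ.IsNearPerfectMatching x y F)
    (hv : v ∈ matchedVerts F) (hmate : mate F v ∈ Γ.nearPartners x) :
    v ∈ Γ.nbhdWithMates x y F :=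
  mem_insert_of_mem (mem_union_right _ (mem_image.mpr ⟨mate F v, mem_erase.mpr
    ⟨hF.mate_ne_right hv, hext.nearPartners_subset_neighborFinset hcard hdeg hmate⟩,
    hF.isEdgeMatching.mate_mate hv⟩))

theorem adj_mem_nbhdWithMates (hF : Γ.IsNearPerfectMatching x y F)
    (hu : u ∈ Γ.nbhdWithMates x y F) (huv : Γ.Adj u v) : v ∈ Γ.nbhdWithMates x y F := by
  have hA : ∀ {a}, Γ.Adj x a → a ∈ Γ.nbhdWithMates x y F := fun ha =>
    mem_insert_of_mem (mem_union_left _ ((mem_neighborFinset _ _ _).mpr ha))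
  by_cases hvx : v = x
  · exact hvx ▸ mem_insert_self _ _
  by_cases hvy : v = y
  · exact hvy ▸ hA (hext.adj_of_isNearPerfectMatching hcard hdeg hF)
  have hvF : v ∈ matchedVerts F := hF.mem_matchedVerts.mpr ⟨hvx, hvy⟩
  simp only [nbhdWithMates, mem_insert, mem_union, mem_neighborFinset, mem_image,
    mem_erase] at hu
  rcases hu with rfl | hxu | ⟨a, ⟨hay, hxa⟩, rfl⟩
  · exact hA huv
  · by_cases huy : u = y
    · subst huy
      exact hext.mem_nbhdWithMates_of_mate_mem hcard hdeg hF hvF (hF.mate_mem_nearPartners huv hvx)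
    by_cases hvb : v = mate F u
    · exact hvb ▸ mem_insert_of_mem (mem_union_right _ (mem_image_of_mem _
        (mem_erase.mpr ⟨huy, (mem_neighborFinset _ _ _).mpr hxu⟩)))
    have huF : u ∈ matchedVerts F := hF.mem_matchedVerts.mpr ⟨hxu.ne', huy⟩
    refine hext.mem_nbhdWithMates_of_mate_mem hcard hdeg hF hvF
      (hF.mate_mem_nearPartners_of_adj_mate (hext.adj_mate_of_adj hcard hdeg hF hxu huy)
        (hF.mate_ne_left huF) ?_ hvx hvy hvb)
    rwa [hF.isEdgeMatching.mate_mate huF]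
  · by_cases hva : v = a
    · exact hva ▸ hA hxa
    exact hA (hext.adj_of_adj_mate hcard hdeg hF hxa hay huv hvx hvy hva)

theorem card_filter_reachable_le : #(univ.filter (Γ.Reachable x)) ≤ 2 * Γ.degree x := by
  obtain ⟨P, hP, hPuniv⟩ := hext.exists_isEdgeMatching_matchedVerts_eq_univ
  have hx : x ∈ matchedVerts P := hPuniv ▸ mem_univ x
  have hF : Γ.IsNearPerfectMatching x (mate P x) (P.erase s(x, mate P x)) := by
    refine ⟨(hP.mate_ne hx).symm, hP.mono (erase_subset _ _), ?_⟩
    ext u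
    rw [hP.mem_matchedVerts_erase (mk_mate_mem hx), hPuniv]
    simp [Sym2.mem_iff]
  calc #(univ.filter (Γ.Reachable x))
      ≤ #(Γ.nbhdWithMates x (mate P x) (P.erase s(x, mate P x))) :=
        card_le_card fun u hu => (mem_filter.mp hu).2.mem_of_forall_adj_mem
          (fun _ ha _ hab => hext.adj_mem_nbhdWithMates hcard hdeg hF ha hab)
          (mem_insert_self _ _)
    _ ≤ 2 * Γ.degree x :=
        card_nbhdWithMates_le (hext.adj_of_isNearPerfectMatching hcard hdeg hF)

end IsKExtendable

end LowDegree

section ComponentOutside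

variable {V : Type*} [Fintype V] [DecidableEq V] {G : SimpleGraph V} {S : Finset V} {v w y : V}

open scoped Classical in
/-- The vertex set of the component of `v` in `G - S`; empty if `v ∈ S`. -/
noncomputable def componentOutside (G : SimpleGraph V) (S : Finset V) (v : V) : Finset V :=
  univ.filter fun y => ∃ (hv : v ∉ S) (hy : y ∉ S),
    (G.induce ((Sᶜ : Finset V) : Set V)).Reachable
      ⟨v, mem_coe.mpr (mem_compl.mpr hv)⟩ ⟨y, mem_coe.mpr (mem_compl.mpr hy)⟩

theorem mem_componentOutside : y ∈ G.componentOutside S v ↔ ∃ (hv : v ∉ S) (hy : y ∉ S),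
    (G.induce ((Sᶜ : Finset V) : Set V)).Reachable
      ⟨v, mem_coe.mpr (mem_compl.mpr hv)⟩ ⟨y, mem_coe.mpr (mem_compl.mpr hy)⟩ := by
  simp [componentOutside]

theorem notMem_of_mem_componentOutside (hy : y ∈ G.componentOutside S v) : y ∉ S :=
  (mem_componentOutside.mp hy).2.1

theorem self_mem_componentOutside (hv : v ∉ S) : v ∈ G.componentOutside S v :=
  mem_componentOutside.mpr ⟨hv, hv, Reachable.refl _⟩

theorem mem_componentOutside_of_adj (hy : y ∈ G.componentOutside S v) (hyw : G.Adj y w)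
    (hw : w ∉ S) : w ∈ G.componentOutside S v := by
  obtain ⟨hv, hy', hr⟩ := mem_componentOutside.mp hy
  exact mem_componentOutside.mpr ⟨hv, hw, hr.trans (Adj.reachable (G := G.induce _) hyw)⟩

theorem card_componentOutside_le [DecidableRel G.Adj] {n k : ℕ} (hS : S ⊆ G.neighborFinset v)
    (hScard : #S = n) (hext : (G.induce ((Sᶜ : Finset V) : Set V)).IsKExtendable k)
    (hcard : n + 2 * k + 2 ≤ Fintype.card V) (hdeg : G.degree v ≤ n + k) :
    #(G.componentOutside S v) ≤ 2 * (G.degree v - n) := by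
  classical
  set Γ := G.induce ((Sᶜ : Finset V) : Set V)
  have hvS : v ∉ S := fun hv => G.irrefl ((mem_neighborFinset _ _ _).mp (hS hv))
  set v' : ((Sᶜ : Finset V) : Set V) := ⟨v, mem_coe.mpr (mem_compl.mpr hvS)⟩
  have hdeg' : Γ.degree v' = G.degree v - n := by
    rw [← card_neighborFinset_eq_degree, ← card_neighborFinset_eq_degree, ← hScard,
      ← card_sdiff_of_subset hS, ← card_map (Function.Embedding.subtype _)]
    congr 1
    ext u
    simp [Γ, v', and_comm]
  have hcardΓ : Fintype.card ((Sᶜ : Finset V) : Set V) = Fintype.card V - n := by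
    simp only [Finset.coe_sort_coe, Fintype.card_coe, card_compl, hScard]
  calc #(G.componentOutside S v)
      ≤ #((univ.filter (Γ.Reachable v')).map (Function.Embedding.subtype _)) := by
        refine card_le_card fun y hy => ?_
        obtain ⟨_, _, hr⟩ := mem_componentOutside.mp hy
        exact mem_map.mpr ⟨_, mem_filter.mpr ⟨mem_univ _, hr⟩, rfl⟩
    _ ≤ 2 * (G.degree v - n) := by
        rw [card_map, ← hdeg']
        exact hext.card_filter_reachable_le (by omega) (by omega)

end ComponentOutside

section NKGraph

variable {V : Type*} [Fintype V] [DecidableEq V] {G : SimpleGraph V} [DecidableRel G.Adj]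
  {S S' : Finset V} {n k : ℕ} {v a s u w y : V}

theorem IsNKGraph.lt_degree (h : G.IsNKGraph n k) (v : V) : n < G.degree v := by
  by_contra! hdeg
  have hsub : G.neighborFinset v ⊆ univ.erase v := fun w hw =>
    mem_erase.mpr ⟨((mem_neighborFinset _ _ _).mp hw).ne', mem_univ w⟩
  obtain ⟨S, hNS, hSv, hScard⟩ := exists_subsuperset_card_eq (n := n) hsub
    (by rwa [card_neighborFinset_eq_degree])
    (by rw [card_erase_of_mem (mem_univ v), card_univ]; have := h.1; omega)
  have hvS : v ∉ S := fun hv => (mem_erase.mp (hSv hv)).1 rfl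
  obtain ⟨M, hM⟩ := (h.2.2 S hScard).1
  obtain ⟨w, hw, -⟩ := hM.1 (hM.2 ⟨v, mem_coe.mpr (mem_compl.mpr hvS)⟩)
  exact mem_compl.mp (mem_coe.mp w.2) (hNS ((mem_neighborFinset _ _ _).mpr (M.adj_sub hw)))

variable (hmin : ∀ u, G.degree v ≤ G.degree u) (hScard : #S = n)
  (hC : #(G.componentOutside S v) ≤ 2 * (G.degree v - n))
include hmin hScard hC

/-- Pigeonhole: the component has at most `2 (deg v - n)` vertices, and `v` and `y` each have
at least `deg v - n` neighbours in it. -/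
theorem exists_adj_adj_of_mem_componentOutside (hy : y ∈ G.componentOutside S v) (hvy : v ≠ y)
    (hnadj : ¬G.Adj v y) (ha : a ∈ G.componentOutside S v) (hav : a ≠ v) (hay : a ≠ y) :
    ∃ z, z ∉ S ∧ z ≠ a ∧ G.Adj v z ∧ G.Adj z y := by
  set C := G.componentOutside S v
  have hvC : v ∈ C := self_mem_componentOutside (mem_componentOutside.mp hy).1
  have hsub : ∀ u ∈ C, ¬G.Adj u v → ¬G.Adj u y →
      (G.neighborFinset u \ S).erase a ⊆ ((C.erase a).erase v).erase y := by
    intro u hu huv huy z hz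
    simp only [mem_erase, mem_sdiff, mem_neighborFinset] at hz ⊢
    refine ⟨?_, ?_, hz.1, mem_componentOutside_of_adj hu hz.2.1 hz.2.2⟩ <;> rintro rfl
    exacts [huy hz.2.1, huv hz.2.1]
  have hlarge : ∀ u, G.degree v - n - 1 ≤ #((G.neighborFinset u \ S).erase a) := by
    intro u
    have := le_card_sdiff S (G.neighborFinset u)
    have := pred_card_le_card_erase (s := G.neighborFinset u \ S) (a := a)
    have := hmin u
    rw [card_neighborFinset_eq_degree] at *
    omega
  have hT : #(((C.erase a).erase v).erase y) + 3 = #C := by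
    have := card_erase_add_one ha
    have := card_erase_add_one (mem_erase.mpr ⟨hav.symm, hvC⟩)
    have := card_erase_add_one (mem_erase.mpr ⟨hvy.symm, mem_erase.mpr ⟨hay.symm, hy⟩⟩)
    omega
  obtain ⟨z, hz⟩ := inter_nonempty_of_card_lt_card_add_card
    (hsub v hvC G.irrefl hnadj) (hsub y hy (fun h => hnadj h.symm) G.irrefl)
    (by have := hlarge v; have := hlarge y; omega)
  simp only [mem_inter, mem_erase, mem_sdiff, mem_neighborFinset] at hz
  exact ⟨z, hz.1.2.2, hz.1.1, hz.1.2.1, hz.2.2.1.symm⟩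

/-- Every vertex of the component other than `a` is within distance two of `v` avoiding `a`,
so it survives moving `a` into the deleted set. -/
theorem mem_componentOutside_of_subset_insert (hva : G.Adj v a) (haS : a ∉ S)
    (hS' : S' ⊆ insert a S) (hvS' : v ∉ S') (hy : y ∈ G.componentOutside S v)
    (hya : y ≠ a) :
    y ∈ G.componentOutside S' v := by
  have hyS' : y ∉ S' := fun h =>
    (mem_insert.mp (hS' h)).elim hya (notMem_of_mem_componentOutside hy)
  have hv' := self_mem_componentOutside (G := G) hvS'
  by_cases hvy : v = y
  · exact hvy ▸ hv'
  by_cases hadj : G.Adj v y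
  · exact mem_componentOutside_of_adj hv' hadj hyS'
  have haC : a ∈ G.componentOutside S v :=
    mem_componentOutside_of_adj (self_mem_componentOutside (mem_componentOutside.mp hy).1) hva haS
  obtain ⟨z, hzS, hza, hvz, hzy⟩ := exists_adj_adj_of_mem_componentOutside hmin hScard hC hy hvy
    hadj haC hva.ne' hya.symm
  have hzS' : z ∉ S' := fun h => (mem_insert.mp (hS' h)).elim hza hzS
  exact mem_componentOutside_of_adj (mem_componentOutside_of_adj hv' hvz hzS') hzy hyS'

variable (hS : S ⊆ G.neighborFinset v)
  (hmax : ∀ S' ∈ powersetCard n (G.neighborFinset v),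
    #(G.componentOutside S' v) ≤ #(G.componentOutside S v))
include hS hmax

/-- `⊇` is `mem_componentOutside_of_subset_insert`; maximality of `S` rules out anything more. -/
theorem componentOutside_insert_erase (hva : G.Adj v a) (haS : a ∉ S) (hs : s ∈ S) :
    G.componentOutside (insert a (S.erase s)) v = insert s ((G.componentOutside S v).erase a) := by
  have hfam : insert a (S.erase s) ∈ powersetCard n (G.neighborFinset v) := by
    refine mem_powersetCard.mpr ⟨insert_subset ((mem_neighborFinset _ _ _).mpr hva)
      ((erase_subset _ _).trans hS), ?_⟩
    rw [card_insert_of_notMem fun h => haS (mem_of_mem_erase h), card_erase_add_one hs, hScard]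
  have hvS' : v ∉ insert a (S.erase s) := fun h =>
    G.irrefl ((mem_neighborFinset _ _ _).mp ((mem_powersetCard.mp hfam).1 h))
  have hsS' : s ∉ insert a (S.erase s) := by
    simp only [mem_insert, mem_erase, not_or]
    exact ⟨fun h => haS (h ▸ hs), fun h => h.1 rfl⟩
  have haC : a ∈ G.componentOutside S v := mem_componentOutside_of_adj
    (self_mem_componentOutside fun h => G.irrefl ((mem_neighborFinset _ _ _).mp (hS h))) hva haS
  refine (eq_of_subset_of_card_le (insert_subset (mem_componentOutside_of_adj
    (self_mem_componentOutside hvS') ((mem_neighborFinset _ _ _).mp (hS hs)) hsS') fun y hy =>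
      mem_componentOutside_of_subset_insert hmin hScard hC hva haS
        (insert_subset_insert _ (erase_subset _ _)) hvS' (mem_of_mem_erase hy)
        (ne_of_mem_erase hy)) ?_).symm
  rw [card_insert_of_notMem fun h => notMem_of_mem_componentOutside (mem_of_mem_erase h) hs,
    card_erase_add_one haC]
  exact hmax _ hfam

theorem adj_mem_componentOutside_union (hva : G.Adj v a) (haS : a ∉ S)
    (hu : u ∈ G.componentOutside S v ∪ S) (huw : G.Adj u w) :
    w ∈ G.componentOutside S v ∪ S := by
  by_cases hwS : w ∈ S
  · exact mem_union_right _ hwS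
  rcases mem_union.mp hu with hu | hs
  · exact mem_union_left _ (mem_componentOutside_of_adj hu huw hwS)
  by_cases hwa : w = a
  · exact mem_union_left _ (hwa ▸ mem_componentOutside_of_adj
      (self_mem_componentOutside fun h => G.irrefl ((mem_neighborFinset _ _ _).mp (hS h))) hva haS)
  have hw := mem_componentOutside_of_adj (G := G) (S := insert a (S.erase u)) (v := v) ?_ huw
    (by simp [hwa, hwS])
  · rw [componentOutside_insert_erase hmin hScard hC hS hmax hva haS hs] at hw
    rcases mem_insert.mp hw with rfl | hw
    exacts [mem_union_right _ hs, mem_union_left _ (mem_of_mem_erase hw)]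
  · rw [componentOutside_insert_erase hmin hScard hC hS hmax hva haS hs]
    exact mem_insert_self _ _

end NKGraph

end SimpleGraph

theorem nkGraph_minDegree_general {V : Type*} [Fintype V] [DecidableEq V]
    (G : SimpleGraph V) [DecidableRel G.Adj] (n k : ℕ)
    (hconn : G.Connected) (h : G.IsNKGraph n k) :
    n + k + 1 ≤ G.minDegree := by
  have : Nonempty V := hconn.nonempty
  obtain ⟨v, hv⟩ := G.exists_minimal_degree_vertex
  have hmin : ∀ u, G.degree v ≤ G.degree u := fun u => hv ▸ G.minDegree_le_degree u
  rw [hv]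
  by_contra! hdeg
  have hnv := h.lt_degree v
  obtain ⟨S, hSfam, hmax⟩ := exists_max_image (powersetCard n (G.neighborFinset v))
    (fun S => #(G.componentOutside S v))
    (powersetCard_nonempty.mpr (by rw [card_neighborFinset_eq_degree]; omega))
  obtain ⟨hS, hScard⟩ := mem_powersetCard.mp hSfam
  have hC := G.card_componentOutside_le hS hScard (h.2.2 S hScard) h.1 (by omega)
  obtain ⟨a, ha⟩ : (G.neighborFinset v \ S).Nonempty := by
    rw [← card_pos, card_sdiff_of_subset hS, card_neighborFinset_eq_degree, hScard]
    omega
  obtain ⟨haN, haS⟩ := mem_sdiff.mp ha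
  have hvS : v ∉ S := fun hv => G.irrefl ((mem_neighborFinset _ _ _).mp (hS hv))
  have hall : univ ⊆ G.componentOutside S v ∪ S := fun u _ =>
    (hconn.preconnected v u).mem_of_forall_adj_mem
      (fun _ hu _ huw => adj_mem_componentOutside_union hmin hScard hC hS hmax
        ((mem_neighborFinset _ _ _).mp haN) haS hu huw)
      (mem_union_left _ (self_mem_componentOutside hvS))
  have := (card_le_card hall).trans (card_union_le _ _)
  have := h.1
  rw [card_univ] at *
  omega

theorem nkGraph_minDegree {V : Type*} [Fintype V] [DecidableEq V]
    (G : SimpleGraph V) [DecidableRel G.Adj] (n k : ℕ) (hk : 1 ≤ k)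
    (hconn : G.Connected) (h : G.IsNKGraph n k) :
    n + k + 1 ≤ G.minDegree :=
  nkGraph_minDegree_general G n k hconn h
end

section
/- If G is an (n,k)-graph with n ≥ 1 and v is any vertex of G, then G - v is an (n-1, k)-graph. -/
open SimpleGraph

namespace SimpleGraph

lemma Subgraph.edgeSet_map' {V W : Type*} {G : SimpleGraph V} {G' : SimpleGraph W}
    (f : G →g G') (M : G.Subgraph) :
    (M.map f).edgeSet = Sym2.map f '' M.edgeSet := by
  ext e
  refine e.ind fun x y => ?_
  simp only [Subgraph.mem_edgeSet, Subgraph.map_adj, Relation.Map, Set.mem_image]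
  constructor
  · rintro ⟨u, w, h, rfl, rfl⟩
    exact ⟨s(u, w), h, rfl⟩
  · rintro ⟨e, he, hmap⟩
    revert he hmap
    refine e.ind fun a b he hmap => ?_
    rw [Sym2.map_pair_eq, Sym2.eq_iff] at hmap
    rcases hmap with ⟨rfl, rfl⟩ | ⟨rfl, rfl⟩
    · exact ⟨a, b, he, rfl, rfl⟩
    · exact ⟨b, a, he.symm, rfl, rfl⟩

lemma Subgraph.IsPerfectMatching.map_iso {V W : Type*} {G : SimpleGraph V}
    {G' : SimpleGraph W} (f : G ≃g G') {M : G.Subgraph} (hM : M.IsPerfectMatching) :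
    (M.map f.toHom).IsPerfectMatching := by
  refine ⟨hM.1.map f.toHom f.injective, fun w => ?_⟩
  simp only [Subgraph.map_verts, Set.mem_image]
  exact ⟨f.symm w, hM.2 _, f.apply_symm_apply w⟩

lemma IsKExtendable.of_iso {V W : Type*} [Fintype V] [Fintype W] {G : SimpleGraph V}
    {G' : SimpleGraph W} (f : G ≃g G') {k : ℕ} (h : G.IsKExtendable k) :
    G'.IsKExtendable k := by
  have hcomp : ∀ M : G'.Subgraph, (M.map f.symm.toHom).map f.toHom = M := by
    intro M
    rw [← Subgraph.map_comp]
    have : f.toHom.comp f.symm.toHom = Hom.id := by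
      ext w; exact f.apply_symm_apply w
    rw [this, Subgraph.map_id]
  obtain ⟨⟨P, hP⟩, hext⟩ := h
  constructor
  · exact ⟨P.map f.toHom, hP.map_iso f⟩
  · intro M hM hcard
    have hM' : (M.map f.symm.toHom).IsMatching := hM.map f.symm.toHom f.symm.injective
    have hcard' : (M.map f.symm.toHom).edgeSet.ncard = k := by
      have hinj : Function.Injective ⇑f.symm.toHom := f.symm.injective
      rw [Subgraph.edgeSet_map', Set.ncard_image_of_injective _ (Sym2.map.injective hinj)]
      exact hcard
    obtain ⟨Q, hQ, hle⟩ := hext _ hM' hcard'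
    refine ⟨Q.map f.toHom, hQ.map_iso f, ?_⟩
    calc M = (M.map f.symm.toHom).map f.toHom := (hcomp M).symm
    _ ≤ Q.map f.toHom := Subgraph.map_mono hle

end SimpleGraph

theorem nkGraph_delete_vertex {V : Type*} [Fintype V] [DecidableEq V]
    (G : SimpleGraph V) (n k : ℕ) (hn : 1 ≤ n) (h : G.IsNKGraph n k) (v : V) :
    (G.induce ((({v} : Finset V)ᶜ : Finset V) : Set V)).IsNKGraph (n - 1) k := by
  obtain ⟨hcard, hpar, hext⟩ := h
  have hA : Fintype.card ((({v} : Finset V)ᶜ : Finset V) : Set V) = Fintype.card V - 1 := by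
    have h1 : Fintype.card ((({v} : Finset V)ᶜ : Finset V) : Set V)
        = (({v} : Finset V)ᶜ).card := by
      rw [← Fintype.card_coe]
      exact Fintype.card_congr (Equiv.refl _)
    rw [h1, Finset.card_compl, Finset.card_singleton]
  refine ⟨?_, ?_, ?_⟩
  · rw [hA]; omega
  · rw [hA]; omega
  · intro S hS
    have hvT : v ∉ S.image Subtype.val := by
      intro hv
      obtain ⟨⟨x, hx⟩, -, hxy⟩ := Finset.mem_image.mp hv
      simp only [Finset.coe_compl, Set.mem_compl_iff, Finset.coe_singleton,
        Set.mem_singleton_iff] at hx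
      exact hx hxy
    have hTcard : (insert v (S.image Subtype.val)).card = n := by
      rw [Finset.card_insert_of_notMem hvT,
        Finset.card_image_of_injective _ Subtype.val_injective, hS]
      omega
    have key := hext _ hTcard
    refine key.of_iso ?_
    have hmem : ∀ x : V, x ∈ (((insert v (S.image Subtype.val))ᶜ : Finset V) : Set V) ↔
        ∃ hx : x ∈ ((({v} : Finset V)ᶜ : Finset V) : Set V),
          (⟨x, hx⟩ : ((({v} : Finset V)ᶜ : Finset V) : Set V)) ∈ ((Sᶜ : Finset _) : Set _) := by
      intro x
      simp only [Finset.coe_compl, Set.mem_compl_iff, Finset.mem_coe,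
        Finset.mem_insert, Finset.mem_image, not_or, not_exists, Finset.mem_compl,
        Finset.coe_singleton, Set.mem_singleton_iff]
      constructor
      · rintro ⟨hxv, hxS⟩
        refine ⟨hxv, fun hc => ?_⟩
        exact hxS ⟨x, by simpa using hxv⟩ ⟨hc, rfl⟩
      · rintro ⟨hx, hSx⟩
        refine ⟨hx, ?_⟩
        rintro y ⟨hy, rfl⟩
        exact hSx hy
    exact {
      toFun := fun x => ⟨⟨x.1, ((hmem x.1).mp x.2).1⟩, ((hmem x.1).mp x.2).2⟩
      invFun := fun y => ⟨y.1.1, (hmem y.1.1).mpr ⟨y.1.2, y.2⟩⟩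
      left_inv := fun x => rfl
      right_inv := fun y => rfl
      map_rel_iff' := Iff.rfl }
end

section
/- No (n,k)-graph with n ≥ 1 and k ≥ 1 is bipartite. -/
/-- In a 2-colorable graph with a perfect matching, the two color classes have equal size. -/
lemma aux_balanced {W : Type*} [Fintype W] {G : SimpleGraph W}
    {M : G.Subgraph} (hM : M.IsPerfectMatching) (c : G.Coloring (Fin 2)) :
    Nat.card {v // c v = 0} = Nat.card {v // c v = 1} := by
  classical
  simp only [Nat.card_eq_fintype_card]
  obtain ⟨hm, hs⟩ := hM
  have hpart : ∀ v : W, ∃! w, M.Adj v w := fun v => hm (hs v)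
  let p : W → W := fun v => (hpart v).choose
  have hadj : ∀ v, M.Adj v (p v) := fun v => (hpart v).choose_spec.1
  have huniq : ∀ v w, M.Adj v w → w = p v := fun v w h => (hpart v).choose_spec.2 w h
  have hpp : ∀ v, p (p v) = v := fun v => (huniq (p v) v (hadj v).symm).symm
  have hc : ∀ v, c v ≠ c (p v) := fun v => c.valid (M.adj_sub (hadj v))
  have flip01 : ∀ x y : Fin 2, x ≠ y → x = 0 → y = 1 := by decide
  have flip10 : ∀ x y : Fin 2, x ≠ y → x = 1 → y = 0 := by decide
  exact Fintype.card_congr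
    { toFun := fun v => ⟨p v.1, flip01 _ _ (hc v.1) v.2⟩
      invFun := fun w => ⟨p w.1, flip10 _ _ (hc w.1) w.2⟩
      left_inv := fun v => Subtype.ext (hpp v.1)
      right_inv := fun w => Subtype.ext (hpp w.1) }

lemma aux_subtype_card {V : Type*} [Fintype V] [DecidableEq V]
    (T : Finset V) (P : V → Prop) [DecidablePred P] :
    Nat.card {v : (T : Set V) // P ↑v} = (T.filter P).card := by
  classical
  rw [Nat.card_eq_fintype_card, Fintype.card_congr (Equiv.subtypeSubtypeEquivSubtypeInter _ _),
    Fintype.card_subtype]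
  congr 1
  ext v
  simp [Finset.mem_filter]

lemma aux_key {V : Type*} [Fintype V] [DecidableEq V] {G : SimpleGraph V} {n k : ℕ}
    (hext : ∀ S : Finset V, S.card = n →
      SimpleGraph.IsKExtendable (G.induce ((Sᶜ : Finset V) : Set V)) k)
    (c : G.Coloring (Fin 2)) {SA SB : Finset V}
    (hSA : ∀ v ∈ SA, c v = 0) (hSB : ∀ v ∈ SB, c v = 1)
    (hn : SA.card + SB.card = n) :
    (Finset.univ.filter (fun v => c v = 0)).card + SB.card
      = (Finset.univ.filter (fun v => c v = 1)).card + SA.card := by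
  classical
  have hdisj : Disjoint SA SB := by
    rw [Finset.disjoint_left]
    intro v hv hv'
    have := hSA v hv
    have := hSB v hv'
    simp_all
  set S : Finset V := SA ∪ SB with hS
  have hScard : S.card = n := by rw [hS, Finset.card_union_of_disjoint hdisj, hn]
  obtain ⟨⟨M, hM⟩, -⟩ := hext S hScard
  let c' : (G.induce ((Sᶜ : Finset V) : Set V)).Coloring (Fin 2) :=
    SimpleGraph.Coloring.mk (fun v => c v.1) (fun hab => c.valid hab)
  have hbal : Nat.card {v : ((Sᶜ : Finset V) : Set V) // c ↑v = 0}
      = Nat.card {v : ((Sᶜ : Finset V) : Set V) // c ↑v = 1} := aux_balanced hM c'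
  rw [aux_subtype_card Sᶜ (fun v => c v = 0),
    aux_subtype_card Sᶜ (fun v => c v = 1)] at hbal
  -- split counts over S and Sᶜ
  have hsplit : ∀ (P : V → Prop) [DecidablePred P],
      (S.filter P).card + ((Sᶜ).filter P).card = (Finset.univ.filter P).card := by
    intro P _
    rw [← Finset.card_union_of_disjoint
      (Finset.disjoint_filter_filter (disjoint_compl_right)),
      ← Finset.filter_union, Finset.union_compl]
  have hS0 : S.filter (fun v => c v = 0) = SA := by
    ext v
    simp only [Finset.mem_filter, hS, Finset.mem_union]
    constructor
    · rintro ⟨hv | hv, hc0⟩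
      · exact hv
      · exact absurd (hSB v hv ▸ hc0) (by decide)
    · intro hv; exact ⟨Or.inl hv, hSA v hv⟩
  have hS1 : S.filter (fun v => c v = 1) = SB := by
    ext v
    simp only [Finset.mem_filter, hS, Finset.mem_union]
    constructor
    · rintro ⟨hv | hv, hc1⟩
      · exact absurd (hSA v hv ▸ hc1) (by decide)
      · exact hv
    · intro hv; exact ⟨Or.inr hv, hSB v hv⟩
  have e0 := hsplit (fun v => c v = 0)
  have e1 := hsplit (fun v => c v = 1)
  rw [hS0] at e0
  rw [hS1] at e1
  omega

/-- No connected `(n,k)`-graph with `n ≥ 1` and `k ≥ 1` is bipartite. -/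
theorem nkGraph_not_bipartite {V : Type*} [Fintype V] [DecidableEq V]
    (G : SimpleGraph V) (n k : ℕ) (hn : 1 ≤ n) (hk : 1 ≤ k)
    (hconn : G.Connected) (h : G.IsNKGraph n k) :
    ¬ G.Colorable 2 := by
  classical
  rintro ⟨c⟩
  obtain ⟨hcard, hmod, hext⟩ := h
  set A : Finset V := Finset.univ.filter (fun v => c v = 0) with hA
  set B : Finset V := Finset.univ.filter (fun v => c v = 1) with hB
  have hABcard : A.card + B.card = Fintype.card V := by
    rw [hA, hB]
    have : (Finset.univ.filter (fun v => c v = 1))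
        = Finset.univ.filter (fun v => ¬ c v = 0) := by
      apply Finset.filter_congr
      intro v _
      have h2 : ∀ x : Fin 2, (x = 1 ↔ ¬ x = 0) := by decide
      exact h2 (c v)
    rw [this, Finset.card_filter_add_card_filter_not, Finset.card_univ]
  -- both color classes are nonempty
  have hedge : ∃ u v : V, G.Adj u v := by
    obtain ⟨S, -, hScard⟩ := Finset.exists_subset_card_eq
      (show n ≤ (Finset.univ : Finset V).card by rw [Finset.card_univ]; omega)
    obtain ⟨⟨M, hM⟩, -⟩ := hext S hScard
    have hpos : 0 < Fintype.card ((Sᶜ : Finset V) : Set V) := by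
      simp only [Finset.coe_sort_coe, Fintype.card_coe, Finset.card_compl,
        Finset.card_univ]
      omega
    have hne : Nonempty ((Sᶜ : Finset V) : Set V) := Fintype.card_pos_iff.mp hpos
    obtain ⟨v⟩ := hne
    obtain ⟨w, hw, -⟩ := hM.1 (hM.2 v)
    exact ⟨v.1, w.1, M.adj_sub hw⟩
  have hApos : 1 ≤ A.card := by
    obtain ⟨u, v, huv⟩ := hedge
    have hne := c.valid huv
    have h2 : ∀ x y : Fin 2, x ≠ y → x = 0 ∨ y = 0 := by decide
    rcases h2 _ _ hne with h' | h'
    · exact Finset.card_pos.2 ⟨u, by simp [hA, h']⟩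
    · exact Finset.card_pos.2 ⟨v, by simp [hA, h']⟩
  have hBpos : 1 ≤ B.card := by
    obtain ⟨u, v, huv⟩ := hedge
    have hne := c.valid huv
    have h2 : ∀ x y : Fin 2, x ≠ y → x = 1 ∨ y = 1 := by decide
    rcases h2 _ _ hne with h' | h'
    · exact Finset.card_pos.2 ⟨u, by simp [hB, h']⟩
    · exact Finset.card_pos.2 ⟨v, by simp [hB, h']⟩
  set s : ℕ := min A.card n with hs
  have hs1 : 1 ≤ s := le_min hApos hn
  have hsA : s ≤ A.card := min_le_left _ _
  have hsn : s ≤ n := min_le_right _ _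
  have hsB : n - s + 1 ≤ B.card := by
    rcases min_cases A.card n with ⟨h', h''⟩ | ⟨h', h''⟩ <;> omega
  obtain ⟨SA, hSAsub, hSAcard⟩ := Finset.exists_subset_card_eq hsA
  obtain ⟨SA', hSA'sub, hSA'card⟩ := Finset.exists_subset_card_eq
    (show s - 1 ≤ SA.card by omega)
  obtain ⟨SB, hSBsub, hSBcard⟩ := Finset.exists_subset_card_eq
    (show n - s ≤ B.card by omega)
  obtain ⟨SB', hSB'sub, hSB'card⟩ := Finset.exists_subset_card_eq hsB
  have hmemA : ∀ v ∈ SA, c v = 0 := fun v hv =>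
    (Finset.mem_filter.1 (hSAsub hv)).2
  have hmemA' : ∀ v ∈ SA', c v = 0 := fun v hv => hmemA v (hSA'sub hv)
  have hmemB : ∀ v ∈ SB, c v = 1 := fun v hv =>
    (Finset.mem_filter.1 (hSBsub hv)).2
  have hmemB' : ∀ v ∈ SB', c v = 1 := fun v hv =>
    (Finset.mem_filter.1 (hSB'sub hv)).2
  have e1 := aux_key hext c hmemA hmemB (by omega)
  have e2 := aux_key hext c hmemA' hmemB' (by omega)
  rw [← hA, ← hB] at e1 e2
  omega
end
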